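/- arXiv:1409.3418 — 8 statements merged into one kernel-verified Lean document; each statement's English description precedes it below -/
import Mathlib

section
/- Let (X,d,p) be a pointed metric space, let B be a countable set of sequences of points of X, and let (ρ_n) be a scaling sequence such that limsup_{n→∞} d(b_n,p)/ρ_n < ∞ for every (b_n) ∈ B. Then there exists a strictly increasing sequence (n_k) of natural numbers such that the family B' = { (b_{n_k})_{k∈ℕ} : (b_n) ∈ B } is self-stable w.r.t. the scaling sequence (ρ_{n_k})_{k∈ℕ}. -/
open Filter Topology Set
open scoped ENNReal

/-- A scaling sequence: strictly positive reals tending to zero. -/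
def ScalingSeq (r : ℕ → ℝ) : Prop :=
  (∀ n, 0 < r n) ∧ Tendsto r atTop (𝓝 (0 : ℝ))

/-- Two sequences of points are mutually stable w.r.t. a scaling sequence. -/
def MutuallyStable {X : Type*} [MetricSpace X] (r : ℕ → ℝ) (x y : ℕ → X) : Prop :=
  ∃ L : ℝ, Tendsto (fun n => dist (x n) (y n) / r n) atTop (𝓝 L)

/-- A family of sequences is self-stable w.r.t. a scaling sequence. -/
def SelfStable {X : Type*} [MetricSpace X] (r : ℕ → ℝ) (F : Set (ℕ → X)) : Prop :=
  ∀ x ∈ F, ∀ y ∈ F, MutuallyStable r x y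

/-- A maximal self-stable family. -/
def MaxSelfStable {X : Type*} [MetricSpace X] (r : ℕ → ℝ) (F : Set (ℕ → X)) : Prop :=
  SelfStable r F ∧ ∀ G : Set (ℕ → X), SelfStable r G → F ⊆ G → G = F

/-- A sequence of reals is eventually decreasing. -/
def EvDecr (τ : ℕ → ℝ) : Prop := ∀ᶠ n in atTop, τ (n + 1) ≤ τ n

/-- A normal scaling sequence for a pointed metric space `(X, d, p)`. -/
def NormalScaling {X : Type*} [MetricSpace X] (p : X) (r : ℕ → ℝ) : Prop :=
  ScalingSeq r ∧ EvDecr r ∧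
    ∃ x : ℕ → X, Tendsto (fun n => dist (x n) p / r n) atTop (𝓝 (1 : ℝ))

/-- The set `Ẽ₀ᵈ(E)` of eventually decreasing sequences of nonzero points of `E`
tending to zero. -/
def E0d (E : Set ℝ) : Set (ℕ → ℝ) :=
  {τ | EvDecr τ ∧ (∀ n, τ n ∈ E \ {0}) ∧ Tendsto τ atTop (𝓝 (0 : ℝ))}

/-- `Ioo a b` is a connected component of the interior of `[0,∞) \ E`. -/
def IsCompExt (E : Set ℝ) (a b : ℝ) : Prop :=
  a < b ∧ Ioo a b ⊆ interior (Ici 0 \ E) ∧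
    ∀ a' b' : ℝ, a' ≤ a → b ≤ b' → Ioo a' b' ⊆ interior (Ici 0 \ E) → a' = a ∧ b' = b

/-- The set `Ĩ_E^d` of sequences of intervals. -/
def IEd (E : Set ℝ) (a b : ℕ → ℝ) : Prop :=
  (∀ n, IsCompExt E (a n) (b n)) ∧ EvDecr a ∧ Tendsto a atTop (𝓝 (0 : ℝ)) ∧
    Tendsto (fun n => (b n - a n) / b n) atTop (𝓝 (1 : ℝ))

/-- The equivalence `x ≍ y` for sequences of strictly positive numbers. -/
def Asymp (x y : ℕ → ℝ) : Prop :=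
  ∃ c₁ c₂ : ℝ, 0 < c₁ ∧ 0 < c₂ ∧ ∀ n, c₁ * x n < y n ∧ y n < c₂ * x n

/-- `E` is `τ`-strongly porous at `0`. -/
def TPorous (E : Set ℝ) (τ : ℕ → ℝ) : Prop :=
  ∃ a b : ℕ → ℝ, IEd E a b ∧ Asymp τ a

/-- `E` is completely strongly porous at `0`. -/
def CSP (E : Set ℝ) : Prop := ∀ τ ∈ E0d E, TPorous E τ

/-- The relation `⪯` (on the first components of members of `Ĩ_E^d`). -/
def Preceq (a l : ℕ → ℝ) : Prop :=
  ∃ (N₁ : ℕ) (f : ℕ → ℕ), ∀ n ≥ N₁, a n = l (f n)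

/-- `(l, m)` is a universal element of `Ĩ_E^d`. -/
def UnivElem (E : Set ℝ) (l m : ℕ → ℝ) : Prop :=
  IEd E l m ∧ ∀ a b : ℕ → ℝ, IEd E a b → Preceq a l

/-- The quantity `M(L̃) = limsup lₙ / m_{n+1}`, valued in `[0,∞]`. -/
noncomputable def MQ (l m : ℕ → ℝ) : ℝ≥0∞ :=
  Filter.limsup (fun n => ENNReal.ofReal (l n / m (n + 1))) atTop

/-- The quantity `C(τ̃)`, valued in `[0,∞]` (inf of the empty set is `∞`). -/
noncomputable def Ctau (E : Set ℝ) (τ : ℕ → ℝ) : ℝ≥0∞ :=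
  sInf {v | ∃ a b : ℕ → ℝ, IEd E a b ∧ (∀ᶠ n in atTop, τ n ≤ a n) ∧
    v = Filter.limsup (fun n => ENNReal.ofReal (a n / τ n)) atTop}

/-- The quantity `C_E`, valued in `[0,∞]`. -/
noncomputable def CE (E : Set ℝ) : ℝ≥0∞ :=
  sSup {v | ∃ τ ∈ E0d E, v = Ctau E τ}

/-- The distance set `S_p(X) = {d(x,p) : x ∈ X}`. -/
def SpSet (X : Type*) [MetricSpace X] (p : X) : Set ℝ := {t | ∃ x : X, t = dist x p}

/-- `R*_n(X,p)`: the supremum, over normal scaling sequences `r` and sequences `x` in `X`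
for which the finite limit `lim d(xₙ,p)/rₙ` exists, of this limit, in `[0,∞]`
(sup of the empty set is `0`). -/
noncomputable def RstarN (X : Type*) [MetricSpace X] (p : X) : ℝ≥0∞ :=
  sSup {v | ∃ (r : ℕ → ℝ) (x : ℕ → X) (L : ℝ), NormalScaling p r ∧
    Tendsto (fun n => dist (x n) p / r n) atTop (𝓝 L) ∧ v = ENNReal.ofReal L}

/-- `Rⁿ_*(X,p)`: the corresponding infimum over strictly positive such limits, in `[0,∞]`
(inf of the empty set is `∞`). -/
noncomputable def RlowN (X : Type*) [MetricSpace X] (p : X) : ℝ≥0∞ :=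
  sInf {v | ∃ (r : ℕ → ℝ) (x : ℕ → X) (L : ℝ), NormalScaling p r ∧
    Tendsto (fun n => dist (x n) p / r n) atTop (𝓝 L) ∧ 0 < L ∧ v = ENNReal.ofReal L}

/-- `λ(E,0,h)`: the length of the largest open subinterval of `(0,h)` containing
no point of `E`. -/
noncomputable def lamE (E : Set ℝ) (h : ℝ) : ℝ :=
  sSup {d | ∃ a b : ℝ, 0 ≤ a ∧ a ≤ b ∧ b ≤ h ∧ Ioo a b ∩ E = ∅ ∧ d = b - a}

/-- `E` is strongly porous at `0`: the right upper porosity `p⁺(E,0)` equals `1`. -/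
def StronglyPorousAtZero (E : Set ℝ) : Prop :=
  Filter.limsup (fun h => lamE E h / h) (𝓝[>] (0 : ℝ)) = 1

/-! The quantities `d(bₙ, b'ₙ)/ρₙ`, indexed by the countable set `B × B`, form one
sequence in the compact metrizable space `[0, ∞]^(B × B)`, so a single subsequence makes all of
them converge. The triangle inequality through `p` bounds each limsup by those of `d(bₙ, p)/ρₙ`
and `d(b'ₙ, p)/ρₙ`, so every limit along the subsequence is finite. -/

lemma ENNReal.limsup_add_lt_top {α : Type*} {f : Filter α} {u v : α → ℝ≥0∞}
    (hu : limsup u f < ⊤) (hv : limsup v f < ⊤) : limsup (u + v) f < ⊤ := by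
  have hu_ev := eventually_lt_of_limsup_lt (ENNReal.lt_add_right hu.ne one_ne_zero)
  have hv_ev := eventually_lt_of_limsup_lt (ENNReal.lt_add_right hv.ne one_ne_zero)
  refine lt_of_le_of_lt (limsup_le_of_le (a := limsup u f + 1 + (limsup v f + 1)) ?_ ?_) ?_
  · isBoundedDefault
  · filter_upwards [hu_ev, hv_ev] with x hux hvx using add_le_add hux.le hvx.le
  · finiteness

lemma limsup_ofReal_dist_div_lt_top {X : Type*} [PseudoMetricSpace X] {p : X} {x y : ℕ → X}
    {r : ℕ → ℝ} (hr : ∀ n, 0 ≤ r n)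
    (hx : limsup (fun n => ENNReal.ofReal (dist (x n) p / r n)) atTop < ⊤)
    (hy : limsup (fun n => ENNReal.ofReal (dist (y n) p / r n)) atTop < ⊤) :
    limsup (fun n => ENNReal.ofReal (dist (x n) (y n) / r n)) atTop < ⊤ := by
  have h_triangle (n : ℕ) : ENNReal.ofReal (dist (x n) (y n) / r n) ≤
      ENNReal.ofReal (dist (x n) p / r n) + ENNReal.ofReal (dist (y n) p / r n) := by
    refine le_trans ?_ ENNReal.ofReal_add_le
    rw [← add_div]
    have := hr n
    gcongr
    exact dist_triangle_right _ _ _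
  exact (limsup_le_limsup (Eventually.of_forall h_triangle)).trans_lt
    (ENNReal.limsup_add_lt_top hx hy)

lemma le_limsup_of_tendsto_comp {α : Type*} [CompleteLinearOrder α] [TopologicalSpace α]
    [OrderTopology α] {u : ℕ → α} {φ : ℕ → ℕ} (hφ : Tendsto φ atTop atTop) {a : α}
    (ha : Tendsto (fun k => u (φ k)) atTop (𝓝 a)) : a ≤ limsup u atTop := by
  rw [← ha.limsup_eq, ← Function.comp_def, limsup_comp]
  exact limsup_le_limsup_of_le hφ

lemma ENNReal.exists_strictMono_forall_tendsto {ι : Type*} [Countable ι] (u : ℕ → ι → ℝ≥0∞) :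
    ∃ (a : ι → ℝ≥0∞) (φ : ℕ → ℕ), StrictMono φ ∧
      ∀ i, Tendsto (fun k => u (φ k) i) atTop (𝓝 (a i)) := by
  obtain ⟨a, φ, hφ, hconv⟩ := CompactSpace.tendsto_subseq u
  exact ⟨a, φ, hφ, tendsto_pi_nhds.1 hconv⟩

lemma ENNReal.tendsto_of_tendsto_ofReal {α : Type*} {l : Filter α} {f : α → ℝ}
    (hf : ∀ i, 0 ≤ f i) {a : ℝ≥0∞} (ha : a ≠ ⊤)
    (h : Tendsto (fun i => ENNReal.ofReal (f i)) l (𝓝 a)) : Tendsto f l (𝓝 a.toReal) := by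
  simpa only [Function.comp_def, ENNReal.toReal_ofReal (hf _)] using
    (ENNReal.tendsto_toReal ha).comp h

/-- A countable family with bounded `limsup d(bₙ,p)/ρₙ` admits a common
subsequence along which it becomes self-stable. -/
theorem stmt_1 {X : Type*} [MetricSpace X] (p : X) (B : Set (ℕ → X)) (hB : B.Countable)
    (ρ : ℕ → ℝ) (hρ : ScalingSeq ρ)
    (hbound : ∀ b ∈ B,
      Filter.limsup (fun n => ENNReal.ofReal (dist (b n) p / ρ n)) atTop < ⊤) :
    ∃ φ : ℕ → ℕ, StrictMono φ ∧
      ∀ b ∈ B, ∀ b' ∈ B,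
        MutuallyStable (fun k => ρ (φ k)) (fun k => b (φ k)) (fun k => b' (φ k)) := by
  have : Countable B := hB.to_subtype
  have hρ_nonneg : ∀ n, 0 ≤ ρ n := fun n => (hρ.1 n).le
  obtain ⟨a, φ, hφ, hconv⟩ := ENNReal.exists_strictMono_forall_tendsto
    fun n (c : B × B) => ENNReal.ofReal (dist (c.1.1 n) (c.2.1 n) / ρ n)
  refine ⟨φ, hφ, fun b hb b' hb' => ⟨(a (⟨b, hb⟩, ⟨b', hb'⟩)).toReal, ?_⟩⟩
  have hlim := hconv (⟨b, hb⟩, ⟨b', hb'⟩)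
  have ha_fin : a (⟨b, hb⟩, ⟨b', hb'⟩) ≠ ⊤ :=
    ((le_limsup_of_tendsto_comp hφ.tendsto_atTop hlim).trans_lt
      (limsup_ofReal_dist_div_lt_top hρ_nonneg (hbound b hb) (hbound b' hb'))).ne
  exact ENNReal.tendsto_of_tendsto_ofReal
    (fun k => div_nonneg dist_nonneg (hρ_nonneg _)) ha_fin hlim
end

section
/- Let E ⊆ [0,∞), let (γ_n) ∈ Ẽ_0^d(E), let ((a_n,b_n)) ∈ Ĩ_E^d, and write ã = (a_n). Then (γ_n) ≍ (a_n) holds if and only if limsup_{n→∞} a_n/γ_n < ∞ and γ_n ≤ a_n for all sufficiently large n. -/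
open Filter Topology Set
open scoped ENNReal

lemma limsup_ofReal_lt_top_iff {f : ℕ → ℝ} :
    limsup (fun n => ENNReal.ofReal (f n)) atTop < ⊤ ↔ ∃ C, ∀ᶠ n in atTop, f n ≤ C := by
  constructor
  · intro h
    obtain ⟨C, -, hlt, -⟩ := ENNReal.lt_iff_exists_real_btwn.1 h
    exact ⟨C, (eventually_lt_of_limsup_lt hlt).mono fun n hn =>
      (ENNReal.ofReal_lt_ofReal_iff'.1 hn).1.le⟩
  · rintro ⟨C, hC⟩
    calc limsup (fun n => ENNReal.ofReal (f n)) atTop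
        ≤ ENNReal.ofReal C := limsup_le_of_le (by isBoundedDefault)
          (hC.mono fun n hn => ENNReal.ofReal_le_ofReal hn)
      _ < ⊤ := ENNReal.ofReal_lt_top

lemma exists_forall_lt_of_eventually_le {f : ℕ → ℝ} {C : ℝ} (h : ∀ᶠ n in atTop, f n ≤ C) :
    ∃ C', ∀ n, f n < C' := by
  obtain ⟨M, hM⟩ := (isBoundedUnder_of_eventually_le h).bddAbove_range
  exact ⟨M + 1, fun n => (hM (mem_range_self n)).trans_lt (lt_add_one M)⟩

/-- Finitely many positive ratios are bounded away from `0` and `∞`. -/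
lemma asymp_of_eventually_div_bounds {x y : ℕ → ℝ} {c C : ℝ} (hx : ∀ n, 0 < x n)
    (hy : ∀ n, 0 < y n) (hc : 0 < c) (hlow : ∀ᶠ n in atTop, c ≤ y n / x n)
    (hup : ∀ᶠ n in atTop, y n / x n ≤ C) : Asymp x y := by
  obtain ⟨C', hC'⟩ := exists_forall_lt_of_eventually_le hup
  have hinv : ∀ᶠ n in atTop, x n / y n ≤ c⁻¹ := hlow.mono fun n hn => by
    rw [← inv_div]
    exact inv_anti₀ hc hn
  obtain ⟨D, hD⟩ := exists_forall_lt_of_eventually_le hinv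
  have hD0 : 0 < D := (div_pos (hx 0) (hy 0)).trans (hD 0)
  refine ⟨D⁻¹, C', inv_pos.2 hD0, (div_pos (hy 0) (hx 0)).trans (hC' 0), fun n => ⟨?_, ?_⟩⟩
  · rw [← lt_div_iff₀ (hx n), ← inv_div]
    exact inv_strictAnti₀ (div_pos (hx n) (hy n)) (hD n)
  · exact (div_lt_iff₀ (hx n)).1 (hC' n)

lemma pos_of_mem_E0d {E : Set ℝ} (hE : E ⊆ Ici 0) {γ : ℕ → ℝ} (hγ : γ ∈ E0d E) (n : ℕ) :
    0 < γ n :=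
  (hE (hγ.2.1 n).1).lt_of_ne' (hγ.2.1 n).2

lemma frequently_mem_of_mem_E0d {E : Set ℝ} (hE : E ⊆ Ici 0) {γ : ℕ → ℝ} (hγ : γ ∈ E0d E) :
    ∃ᶠ x in 𝓝[>] (0 : ℝ), x ∈ E :=
  (tendsto_nhdsWithin_iff.2 ⟨hγ.2.2, .of_forall (pos_of_mem_E0d hE hγ)⟩).frequently
    (.of_forall fun n => (hγ.2.1 n).1)

namespace IsCompExt

variable {E : Set ℝ} {a b : ℝ}

lemma notMem_Ioo (h : IsCompExt E a b) {x : ℝ} (hx : x ∈ E) : x ∉ Ioo a b :=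
  fun hx' => (interior_subset (h.2.1 hx')).2 hx

lemma nonneg (h : IsCompExt E a b) : 0 ≤ a := by
  have hcl : a ∈ closure (Ioo a b) := by
    rw [closure_Ioo h.1.ne]
    exact left_mem_Icc.2 h.1.le
  simpa using closure_mono (h.2.1.trans (interior_subset.trans sdiff_subset)) hcl

lemma pos (h : IsCompExt E a b) (hE : ∃ᶠ x in 𝓝[>] (0 : ℝ), x ∈ E) : 0 < a := by
  rcases h.nonneg.lt_or_eq with ha | rfl
  · exact ha
  · obtain ⟨x, hxE, hx⟩ := (hE.and_eventually (Ioo_mem_nhdsGT h.1)).exists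
    exact absurd hx (h.notMem_Ioo hxE)

end IsCompExt

lemma IEd.tendsto_div {E : Set ℝ} {a b : ℕ → ℝ} (h : IEd E a b) :
    Tendsto (fun n => a n / b n) atTop (𝓝 0) := by
  have hb : ∀ n, b n ≠ 0 := fun n => ((h.1 n).nonneg.trans_lt (h.1 n).1).ne'
  have hsub := (tendsto_const_nhds (x := (1 : ℝ))).sub h.2.2.2
  rw [sub_self] at hsub
  refine hsub.congr fun n => ?_
  field_simp [hb n]
  ring

lemma le_of_notMem_Ioo {x a b c : ℝ} (hx : x ∉ Ioo a b) (hc : 0 ≤ c) (hxa : c * x < a)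
    (hab : a ≤ c * b) : x ≤ a := by
  by_contra! hax
  have hbx : b ≤ x := not_lt.1 fun hxb => hx ⟨hax, hxb⟩
  nlinarith

/-- For `γ ∈ Ẽ₀ᵈ(E)` and `((aₙ,bₙ)) ∈ Ĩ_Eᵈ`, `γ ≍ a` holds iff
`limsup aₙ/γₙ < ∞` and `γₙ ≤ aₙ` for sufficiently large `n`. -/
theorem stmt_2 (E : Set ℝ) (hE : E ⊆ Ici 0) (γ : ℕ → ℝ) (hγ : γ ∈ E0d E)
    (a b : ℕ → ℝ) (hab : IEd E a b) :
    Asymp γ a ↔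
      (Filter.limsup (fun n => ENNReal.ofReal (a n / γ n)) atTop < ⊤ ∧
        ∀ᶠ n in atTop, γ n ≤ a n) := by
  have hγpos := pos_of_mem_E0d hE hγ
  have hapos : ∀ n, 0 < a n := fun n => (hab.1 n).pos (frequently_mem_of_mem_E0d hE hγ)
  rw [limsup_ofReal_lt_top_iff]
  constructor
  · rintro ⟨c₁, c₂, hc₁, -, hc⟩
    refine ⟨⟨c₂, .of_forall fun n => (div_le_iff₀ (hγpos n)).2 (hc n).2.le⟩, ?_⟩
    -- `γ n ∈ E` avoids the gap, and eventually `c₁ γ n < a n ≤ c₁ b n` rules out `b n ≤ γ n`.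
    filter_upwards [hab.tendsto_div.eventually_lt_const hc₁] with n hn
    have hb : 0 < b n := (hapos n).trans (hab.1 n).1
    exact le_of_notMem_Ioo ((hab.1 n).notMem_Ioo (hγ.2.1 n).1) hc₁.le (hc n).1
      ((div_lt_iff₀ hb).1 hn).le
  · rintro ⟨⟨C, hC⟩, hle⟩
    exact asymp_of_eventually_div_bounds hγpos hapos one_pos
      (hle.mono fun n hn => (one_le_div (hγpos n)).2 hn) hC
end

section
/- Let E ⊆ [0,∞) be strongly porous at 0 and let 0 be an accumulation point of E. Then E is completely strongly porous at 0 if and only if there exists a universal element L̃ of Ĩ_E^d with M(L̃) < ∞. -/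
open Filter Topology Set
open scoped ENNReal

/-!
If `E` is completely strongly porous, apply this to a sequence `t` of points of `E` that decreases
at least geometrically but meets `E` at every scale up to a factor 4: each `t (k + 1)` is, up to a
factor 2, the largest point of `E` below `t k / 2`. The resulting `(lₙ, mₙ)` with `lₙ ≍ tₙ` is
universal: a left endpoint `x` of a gap is within a factor 4 of some `t j`, and then `l j` can lie
neither left of `x` (the long gap starting at `l j` would contain `x`) nor right of it (the long
gap starting at `x` would contain `l j`). The same scale argument bounds `lₖ / mₖ₊₁`.

Conversely, if `lₖ ≤ K mₖ₊₁` eventually and `τ ∈ Ẽ₀ᵈ(E)`, choose `j` with `lⱼ₊₁ < τₙ ≤ lⱼ`.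
As `τₙ ∈ E` cannot lie in the gap `(lⱼ₊₁, mⱼ₊₁)`, we get `τₙ ≤ lⱼ ≤ K mⱼ₊₁ ≤ K τₙ`, so the
subsequence `(lⱼ)` witnesses `τ`-strong porosity.
-/

section Sequences

lemma exists_succ_lt_le {u : ℕ → ℝ} (hu : Tendsto u atTop (𝓝 0)) {v : ℝ} (hv : 0 < v) {N : ℕ}
    (hN : v ≤ u N) : ∃ i ≥ N, u (i + 1) < v ∧ v ≤ u i := by
  by_contra! h
  have hall : ∀ i ≥ N, v ≤ u i := fun i hi => by
    induction i, hi using Nat.le_induction with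
    | base => exact hN
    | succ i hi ih => exact not_lt.1 fun hlt => (h i hi hlt).not_ge ih
  obtain ⟨i, hi, hiN⟩ := ((hu.eventually_lt_const hv).and (eventually_ge_atTop N)).exists
  exact (hall i hiN).not_gt hi

lemma tendsto_atTop_of_comp_tendsto_zero {u : ℕ → ℝ} (hu : ∀ i, 0 < u i) {j : ℕ → ℕ}
    (h : Tendsto (fun n => u (j n)) atTop (𝓝 0)) : Tendsto j atTop atTop := by
  refine tendsto_atTop.2 fun J => ?_
  have hlt : ∀ᶠ n in atTop, ∀ i ∈ Finset.range J, u (j n) < u i :=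
    (eventually_all_finset _).2 fun i _ => h.eventually_lt_const (hu i)
  filter_upwards [hlt] with n hn
  by_contra! hjn
  exact lt_irrefl _ (hn (j n) (Finset.mem_range.2 hjn))

lemma exists_forall_lt_mul_of_eventually_le {u v : ℕ → ℝ} (hu : ∀ n, 0 < u n)
    (hv : ∀ n, 0 < v n) {C : ℝ} (h : ∀ᶠ n in atTop, v n ≤ C * u n) :
    ∃ c > 0, ∀ n, v n < c * u n := by
  obtain ⟨B, hB⟩ : BddAbove (range fun n => v n / u n) :=
    (isBoundedUnder_of_eventually_le (h.mono fun n hn => (div_le_iff₀ (hu n)).2 hn)).bddAbove_range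
  refine ⟨B + 1, by linarith [div_pos (hv 0) (hu 0), hB (mem_range_self 0)], fun n => ?_⟩
  have hn := hB (mem_range_self n)
  rw [← div_lt_iff₀ (hu n)]
  linarith

lemma asymp_of_eventually_le {τ a : ℕ → ℝ} (hτ : ∀ n, 0 < τ n) (ha : ∀ n, 0 < a n) {C D : ℝ}
    (hup : ∀ᶠ n in atTop, a n ≤ C * τ n) (hlow : ∀ᶠ n in atTop, τ n ≤ D * a n) : Asymp τ a := by
  obtain ⟨c₂, hc₂, h₂⟩ := exists_forall_lt_mul_of_eventually_le hτ ha hup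
  obtain ⟨d, hd, h₁⟩ := exists_forall_lt_mul_of_eventually_le ha hτ hlow
  refine ⟨d⁻¹, c₂, inv_pos.2 hd, hc₂, fun n => ⟨?_, h₂ n⟩⟩
  rw [inv_mul_eq_div, div_lt_iff₀ hd]
  linarith [h₁ n]

lemma preceq_of_eventually {a l : ℕ → ℝ} (h : ∀ᶠ n in atTop, ∃ j, a n = l j) : Preceq a l := by
  obtain ⟨N, hN⟩ := eventually_atTop.1 h
  have hex : ∀ n, ∃ j, N ≤ n → a n = l j := fun n =>
    if hn : N ≤ n then (hN n hn).imp fun _ hj _ => hj else ⟨0, fun h => absurd h hn⟩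
  choose f hf using hex
  exact ⟨N, f, hf⟩

lemma MQ_lt_top_iff {l m : ℕ → ℝ} :
    MQ l m < ⊤ ↔ ∃ K : ℝ, ∀ᶠ n in atTop, l n / m (n + 1) ≤ K := by
  constructor
  · intro h
    refine ⟨(MQ l m + 1).toReal, ?_⟩
    filter_upwards [eventually_lt_of_limsup_lt (ENNReal.lt_add_right h.ne one_ne_zero)] with n hn
    exact (ENNReal.ofReal_le_iff_le_toReal (by finiteness)).1 hn.le
  · rintro ⟨K, hK⟩
    refine lt_of_le_of_lt ?_ (ENNReal.ofReal_lt_top (r := K))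
    exact limsup_le_of_le (by isBoundedDefault) (hK.mono fun n hn => ENNReal.ofReal_le_ofReal hn)

end Sequences

section Components

variable {E : Set ℝ} {a b : ℝ}

lemma exists_mem_pos_lt_of_accPt (hE : E ⊆ Ici 0) (hacc : AccPt (0 : ℝ) (Filter.principal E))
    {c : ℝ} (hc : 0 < c) : ∃ e ∈ E, 0 < e ∧ e < c := by
  obtain ⟨e, ⟨hec, heE⟩, he0⟩ := accPt_iff_nhds.1 hacc (Iio c) (Iio_mem_nhds hc)
  exact ⟨e, heE, (hE heE).lt_of_ne' he0, hec⟩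

lemma IsCompExt.left_nonneg (h : IsCompExt E a b) : 0 ≤ a := by
  by_contra! ha
  obtain ⟨x, hax, hx⟩ := exists_between (lt_min h.1 ha)
  have hx0 : 0 ≤ x := (interior_subset (h.2.1 ⟨hax, hx.trans_le (min_le_left _ _)⟩)).1
  exact (hx.trans_le (min_le_right _ _)).not_ge hx0

lemma IsCompExt.right_pos (h : IsCompExt E a b) : 0 < b :=
  h.left_nonneg.trans_lt h.1

lemma IsCompExt.left_pos (hE : E ⊆ Ici 0) (hacc : AccPt (0 : ℝ) (Filter.principal E))
    (h : IsCompExt E a b) : 0 < a := by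
  refine h.left_nonneg.lt_of_ne' ?_
  rintro rfl
  obtain ⟨e, heE, he0, heb⟩ := exists_mem_pos_lt_of_accPt hE hacc h.1
  exact (interior_subset (h.2.1 ⟨he0, heb⟩)).2 heE

lemma IsCompExt.right_le_of_mem {e : ℝ} (h : IsCompExt E a b) (he : e ∈ E) (hae : a < e) :
    b ≤ e :=
  not_lt.1 fun heb => (interior_subset (h.2.1 ⟨hae, heb⟩)).2 he

lemma IsCompExt.left_notMem_interior (h : IsCompExt E a b) : a ∉ interior (Ici 0 \ E) := by
  intro ha
  obtain ⟨l, hla, hl⟩ :=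
    exists_Ioc_subset_of_mem_nhds (isOpen_interior.mem_nhds ha) ⟨a - 1, by linarith⟩
  have hsub : Ioo l b ⊆ interior (Ici 0 \ E) := by
    rw [← Ioc_union_Ioo_eq_Ioo hla.le h.1]
    exact union_subset hl h.2.1
  exact hla.ne (h.2.2 l b hla.le le_rfl hsub).1

lemma IsCompExt.right_notMem_interior (h : IsCompExt E a b) : b ∉ interior (Ici 0 \ E) := by
  intro hb
  obtain ⟨u, hbu, hu⟩ :=
    exists_Ico_subset_of_mem_nhds (isOpen_interior.mem_nhds hb) ⟨b + 1, by linarith⟩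
  have hsub : Ioo a u ⊆ interior (Ici 0 \ E) := by
    rw [← Ioo_union_Ico_eq_Ioo h.1 hbu.le]
    exact union_subset h.2.1 hu
  exact hbu.ne' (h.2.2 a u le_rfl hbu.le hsub).2

lemma IsCompExt.right_le_of_lt {a' b' : ℝ} (h : IsCompExt E a b) (h' : IsCompExt E a' b')
    (hlt : a' < a) : b' ≤ a :=
  not_lt.1 fun hab' => h.left_notMem_interior (h'.2.1 ⟨hlt, hab'⟩)

lemma mem_closure_of_notMem_interior {x : ℝ} (hx : 0 < x) (h : x ∉ interior (Ici 0 \ E)) :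
    x ∈ closure E := by
  by_contra hxE
  refine h (interior_maximal ?_ (isOpen_Ioi.inter isClosed_closure.isOpen_compl) ⟨hx, hxE⟩)
  exact fun y hy => ⟨mem_Ici.2 hy.1.le, fun hyE => hy.2 (subset_closure hyE)⟩

lemma IsCompExt.left_mem_closure (hE : E ⊆ Ici 0) (hacc : AccPt (0 : ℝ) (Filter.principal E))
    (h : IsCompExt E a b) : a ∈ closure E :=
  mem_closure_of_notMem_interior (h.left_pos hE hacc) h.left_notMem_interior

lemma IsCompExt.right_mem_closure (h : IsCompExt E a b) : b ∈ closure E :=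
  mem_closure_of_notMem_interior h.right_pos h.right_notMem_interior

lemma IEd.eventually_mul_lt {l m : ℕ → ℝ} (h : IEd E l m) (C : ℝ) :
    ∀ᶠ n in atTop, C * l n < m n := by
  have h0 : Tendsto (fun n => C * (1 - (m n - l n) / m n)) atTop (𝓝 0) := by
    simpa using ((tendsto_const_nhds (x := (1 : ℝ))).sub h.2.2.2).const_mul C
  filter_upwards [h0.eventually_lt_const one_pos] with n hn
  have hm := (h.1 n).right_pos
  rwa [show 1 - (m n - l n) / m n = l n / m n by field_simp; ring, mul_div_assoc',
    div_lt_one hm] at hn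

lemma IEd.comp {l m : ℕ → ℝ} (h : IEd E l m) {j : ℕ → ℕ} (hj : Tendsto j atTop atTop)
    (hdec : EvDecr fun n => l (j n)) : IEd E (fun n => l (j n)) (fun n => m (j n)) :=
  ⟨fun n => h.1 (j n), hdec, h.2.2.1.comp hj, h.2.2.2.comp hj⟩

end Components

section HalvingNet

structure IsHalvingNet (E : Set ℝ) (t : ℕ → ℝ) : Prop where
  mem : ∀ k, t k ∈ E
  pos : ∀ k, 0 < t k
  succ_le_half : ∀ k, t (k + 1) ≤ t k / 2
  le_two_mul_succ : ∀ k, ∀ e ∈ E, e ≤ t k / 2 → e ≤ 2 * t (k + 1)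

variable {E : Set ℝ}

lemma exists_mem_Ioc_forall_le_two_mul (hE : E ⊆ Ici 0)
    (hacc : AccPt (0 : ℝ) (Filter.principal E)) {c : ℝ} (hc : 0 < c) :
    ∃ e ∈ E, 0 < e ∧ e ≤ c ∧ ∀ e' ∈ E, e' ≤ c → e' ≤ 2 * e := by
  obtain ⟨e₀, he₀E, he₀, he₀c⟩ := exists_mem_pos_lt_of_accPt hE hacc hc
  have hbdd : BddAbove (E ∩ Ioc 0 c) := ⟨c, fun _ hx => hx.2.2⟩
  have hsup : 0 < sSup (E ∩ Ioc 0 c) := he₀.trans_le (le_csSup hbdd ⟨he₀E, he₀, he₀c.le⟩)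
  obtain ⟨e, ⟨heE, he, hec⟩, hlt⟩ :=
    exists_lt_of_lt_csSup (⟨e₀, he₀E, he₀, he₀c.le⟩ : (E ∩ Ioc 0 c).Nonempty) (half_lt_self hsup)
  refine ⟨e, heE, he, hec, fun e' he'E he'c => ?_⟩
  rcases le_or_gt e' 0 with h | h
  · linarith
  · linarith [le_csSup hbdd ⟨he'E, h, he'c⟩]

lemma exists_isHalvingNet (hE : E ⊆ Ici 0) (hacc : AccPt (0 : ℝ) (Filter.principal E)) :
    ∃ t, IsHalvingNet E t := by
  choose! next hnextE hnext_pos hnext_le hnext_max using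
    fun c (hc : 0 < c) => exists_mem_Ioc_forall_le_two_mul hE hacc hc
  set t : ℕ → ℝ := fun k => (fun c => next (c / 2))^[k] (next 1)
  have hsucc : ∀ k, t (k + 1) = next (t k / 2) := fun k => Function.iterate_succ_apply' _ _ _
  have hpos : ∀ k, 0 < t k := fun k => by
    induction k with
    | zero => exact hnext_pos 1 one_pos
    | succ k ih => rw [hsucc]; exact hnext_pos _ (half_pos ih)
  refine ⟨t, fun k => ?_, hpos, fun k => ?_, fun k => ?_⟩
  · cases k with
    | zero => exact hnextE 1 one_pos
    | succ k => rw [hsucc]; exact hnextE _ (half_pos (hpos k))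
  · rw [hsucc]; exact hnext_le _ (half_pos (hpos k))
  · rw [hsucc]; exact hnext_max _ (half_pos (hpos k))

namespace IsHalvingNet

variable {t : ℕ → ℝ}

lemma antitone (ht : IsHalvingNet E t) : Antitone t :=
  antitone_nat_of_succ_le fun k => (ht.succ_le_half k).trans (half_le_self (ht.pos k).le)

lemma tendsto_zero (ht : IsHalvingNet E t) : Tendsto t atTop (𝓝 0) := by
  have hbound : ∀ k, t k ≤ t 0 * (1 / 2) ^ k := fun k => by
    induction k with
    | zero => simp
    | succ k ih =>
      calc t (k + 1) ≤ t k / 2 := ht.succ_le_half k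
        _ ≤ t 0 * (1 / 2) ^ k / 2 := by gcongr
        _ = t 0 * (1 / 2) ^ (k + 1) := by ring
  refine squeeze_zero (fun k => (ht.pos k).le) hbound ?_
  simpa using (tendsto_pow_atTop_nhds_zero_of_lt_one (by norm_num : (0 : ℝ) ≤ 1 / 2)
    (by norm_num)).const_mul (t 0)

lemma mem_E0d (ht : IsHalvingNet E t) : t ∈ E0d E :=
  ⟨Eventually.of_forall fun n => ht.antitone n.le_succ, fun n => ⟨ht.mem n, (ht.pos n).ne'⟩,
    ht.tendsto_zero⟩

lemma exists_near (ht : IsHalvingNet E t) {x : ℝ} (hx : x ∈ closure E) (hx0 : 0 < x)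
    (hxt : 4 * x ≤ t 0) : ∃ j, x / 4 < t j ∧ t j < 4 * x := by
  obtain ⟨e, heE, hxe⟩ := Metric.mem_closure_iff.1 hx (x / 2) (half_pos hx0)
  rw [Real.dist_eq, abs_lt] at hxe
  obtain ⟨k, -, hk, hk'⟩ :=
    exists_succ_lt_le ht.tendsto_zero (by linarith : 0 < 2 * e) (by linarith : 2 * e ≤ t 0)
  have he := ht.le_two_mul_succ k e heE (by linarith)
  exact ⟨k + 1, by linarith, by linarith⟩

variable {l m : ℕ → ℝ} {c₂ : ℝ}

lemma preceq (hE : E ⊆ Ici 0) (hacc : AccPt (0 : ℝ) (Filter.principal E))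
    (ht : IsHalvingNet E t) (hl : ∀ j, IsCompExt E (l j) (m j)) (hc₂ : 0 < c₂)
    (hlt : ∀ j, l j < c₂ * t j) (hfar : ∀ᶠ j in atTop, 4 * t j < m j) {x y : ℕ → ℝ}
    (hxy : IEd E x y) : Preceq x l := by
  obtain ⟨N, hN⟩ := eventually_atTop.1 hfar
  refine preceq_of_eventually ?_
  filter_upwards [hxy.2.2.1.eventually_lt_const (by linarith [ht.pos N] : 0 < t N / 4),
    hxy.eventually_mul_lt (4 * c₂)] with n hxN hxy_n
  obtain ⟨j, hj₁, hj₂⟩ := ht.exists_near ((hxy.1 n).left_mem_closure hE hacc)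
    ((hxy.1 n).left_pos hE hacc) (by linarith [ht.antitone (Nat.zero_le N)])
  have hNj : N < j := ht.antitone.reflect_lt (by linarith)
  refine ⟨j, ?_⟩
  rcases lt_trichotomy (l j) (x n) with h | h | h
  · linarith [(hxy.1 n).right_le_of_lt (hl j) h, hN j hNj.le]
  · exact h.symm
  · linarith [(hl j).right_le_of_lt (hxy.1 n) h, hlt j, mul_lt_mul_of_pos_left hj₂ hc₂]

lemma MQ_lt_top (ht : IsHalvingNet E t) (hl : ∀ j, IsCompExt E (l j) (m j)) (hc₂ : 0 < c₂)
    (hlt : ∀ j, l j < c₂ * t j) (hfar : ∀ᶠ j in atTop, 4 * t j < m j) : MQ l m < ⊤ := by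
  obtain ⟨N, hN⟩ := eventually_atTop.1 hfar
  refine MQ_lt_top_iff.2 ⟨8 * c₂, eventually_atTop.2 ⟨N, fun k hk => ?_⟩⟩
  have hm := (hl (k + 1)).right_pos
  rw [div_le_iff₀ hm]
  by_contra! hsmall
  have hmt : 8 * m (k + 1) < t k := by nlinarith [hlt k]
  obtain ⟨j, hj₁, hj₂⟩ := ht.exists_near (hl (k + 1)).right_mem_closure hm
    (by linarith [ht.antitone (Nat.zero_le k)])
  have hkj : k < j := ht.antitone.reflect_lt (by linarith)
  linarith [ht.antitone (show k + 1 ≤ j by omega), hN (k + 1) (by omega)]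

end IsHalvingNet

end HalvingNet

section Equivalence

variable {E : Set ℝ}

lemma exists_univElem_of_CSP (hE : E ⊆ Ici 0) (hacc : AccPt (0 : ℝ) (Filter.principal E))
    (hcsp : CSP E) : ∃ l m : ℕ → ℝ, UnivElem E l m ∧ MQ l m < ⊤ := by
  obtain ⟨t, ht⟩ := exists_isHalvingNet hE hacc
  obtain ⟨l, m, hl, c₁, c₂, hc₁, hc₂, hasy⟩ := hcsp t ht.mem_E0d
  have hfar : ∀ᶠ j in atTop, 4 * t j < m j := by
    filter_upwards [hl.eventually_mul_lt (4 / c₁)] with j hj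
    calc 4 * t j = 4 / c₁ * (c₁ * t j) := by field_simp
      _ < 4 / c₁ * l j := by gcongr; exact (hasy j).1
      _ < m j := hj
  have hlt : ∀ j, l j < c₂ * t j := fun j => (hasy j).2
  exact ⟨l, m, ⟨hl, fun x y hxy => ht.preceq hE hacc hl.1 hc₂ hlt hfar hxy⟩,
    ht.MQ_lt_top hl.1 hc₂ hlt hfar⟩

lemma tPorous_of_MQ_lt_top (hE : E ⊆ Ici 0) (hacc : AccPt (0 : ℝ) (Filter.principal E))
    {l m : ℕ → ℝ} (hl : IEd E l m) (hM : MQ l m < ⊤) {τ : ℕ → ℝ} (hτ : τ ∈ E0d E) :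
    TPorous E τ := by
  obtain ⟨hτdec, hτE, hτ0⟩ := hτ
  have hτpos : ∀ n, 0 < τ n := fun n => (hE (hτE n).1).lt_of_ne' (hτE n).2
  have hlpos : ∀ j, 0 < l j := fun j => (hl.1 j).left_pos hE hacc
  obtain ⟨K, hK⟩ := MQ_lt_top_iff.1 hM
  obtain ⟨N₀, hN₀⟩ := eventually_atTop.1 (hl.2.1.and hK)
  have hanti : AntitoneOn l (Ici N₀) :=
    antitoneOn_nat_Ici_of_succ_le fun j hj => (hN₀ j hj).1
  have hKm : ∀ j ≥ N₀, l j ≤ K * m (j + 1) := fun j hj =>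
    (div_le_iff₀ (hl.1 (j + 1)).right_pos).1 (hN₀ j hj).2
  have hK0 : 0 ≤ K := by nlinarith [hKm N₀ le_rfl, hlpos N₀, (hl.1 (N₀ + 1)).right_pos]
  have hbracket : ∀ n, ∃ i, τ n ≤ l N₀ → N₀ ≤ i ∧ l (i + 1) < τ n ∧ τ n ≤ l i := fun n =>
    if h : τ n ≤ l N₀ then (exists_succ_lt_le hl.2.2.1 (hτpos n) h).imp fun _ hi _ => hi
    else ⟨0, fun h' => absurd h' h⟩
  choose j hj using hbracket
  have hsmall : ∀ᶠ n in atTop, τ n ≤ l N₀ :=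
    (hτ0.eventually_lt_const (hlpos N₀)).mono fun _ h => h.le
  have hup : ∀ᶠ n in atTop, l (j n) ≤ K * τ n := by
    filter_upwards [hsmall] with n hn
    obtain ⟨hjN, hlτ, -⟩ := hj n hn
    calc l (j n) ≤ K * m (j n + 1) := hKm _ hjN
      _ ≤ K * τ n := by gcongr; exact (hl.1 _).right_le_of_mem (hτE n).1 hlτ
  have hdec : EvDecr fun n => l (j n) := by
    filter_upwards [hτdec, hsmall] with n hτn hn
    obtain ⟨hjN, -, hτl⟩ := hj n hn
    obtain ⟨hjN', hlτ', -⟩ := hj (n + 1) (hτn.trans hn)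
    refine hanti hjN hjN' (not_lt.1 fun hlt => ?_)
    linarith [hanti (show N₀ ≤ j (n + 1) + 1 by omega) hjN (show j (n + 1) + 1 ≤ j n by omega)]
  have hjtop : Tendsto j atTop atTop := tendsto_atTop_of_comp_tendsto_zero hlpos <|
    squeeze_zero' (Eventually.of_forall fun n => (hlpos _).le) hup (by simpa using hτ0.const_mul K)
  exact ⟨_, _, hl.comp hjtop hdec, asymp_of_eventually_le hτpos (fun n => hlpos _) hup
    (D := 1) (hsmall.mono fun n hn => by simpa using (hj n hn).2.2)⟩

end Equivalence

theorem stmt_3_general (E : Set ℝ) (hE : E ⊆ Ici 0)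
    (hacc : AccPt (0 : ℝ) (Filter.principal E)) :
    CSP E ↔ ∃ l m : ℕ → ℝ, UnivElem E l m ∧ MQ l m < ⊤ :=
  ⟨exists_univElem_of_CSP hE hacc,
    fun ⟨_, _, hu, hM⟩ _ hτ => tPorous_of_MQ_lt_top hE hacc hu.1 hM hτ⟩

/-- Let `E ⊆ [0,∞)` be strongly porous at `0` with `0` an accumulation
point of `E`. Then `E` is completely strongly porous at `0` iff there is a universal
element `L̃` of `Ĩ_Eᵈ` with `M(L̃) < ∞`. -/
theorem stmt_3 (E : Set ℝ) (hE : E ⊆ Ici 0) (hsp : StronglyPorousAtZero E)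
    (hacc : AccPt (0 : ℝ) (Filter.principal E)) :
    CSP E ↔ ∃ l m : ℕ → ℝ, UnivElem E l m ∧ MQ l m < ⊤ :=
  stmt_3_general E hE hacc
end

section
/- Let E ⊆ [0,∞) and let (τ_n) ∈ Ẽ_0^d(E). Then E is (τ_n)-strongly porous at 0 if and only if there exists a constant k ∈ (1,∞) such that for every K ∈ (k,∞) there exists N₁(K) ∈ ℕ with (kτ_n, Kτ_n) ∩ E = ∅ for every n ≥ N₁(K). -/
/-!
If `(aₙ, bₙ)` are gaps of `E` with `aₙ ≍ τₙ` and `aₙ / bₙ → 0`, then for `k` above the upper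
constant of `≍` and any `K > k`, the band `(k τₙ, K τₙ)` eventually lies inside `(aₙ, bₙ)`.
Conversely, if these bands are eventually free of `E`, take the component of the complement of
`closure E` around `(k + 1) τₙ`: its left end lies in `[τₙ, (k + 1) τₙ]` because `τₙ ∈ E`, and its
right end eventually exceeds `K τₙ` for every `K`, so these components (with the first finitely
many replaced by a later one) are the required gaps.
-/

open Filter Topology Set
open scoped ENNReal

theorem interior_Ici_zero_diff (E : Set ℝ) : interior (Ici 0 \ E) = Ioi 0 ∩ (closure E)ᶜ := by
  rw [sdiff_eq, interior_inter, interior_Ici, interior_compl]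

theorem IsCompExt.disjoint {E : Set ℝ} {a b : ℝ} (h : IsCompExt E a b) : Disjoint (Ioo a b) E :=
  Set.disjoint_left.2 fun _ hx hxE => (interior_subset (h.2.1 hx)).2 hxE

theorem isCompExt_of_mem_closure {E : Set ℝ} {a b : ℝ} (ha₀ : 0 ≤ a) (hab : a < b)
    (ha : a ∈ closure E) (hb : b ∈ closure E) (hgap : Disjoint (Ioo a b) E) :
    IsCompExt E a b := by
  have hgap' := hgap.closure_right isOpen_Ioo
  refine ⟨hab, fun x hx => ?_, fun a' b' ha' hb' hsub => ?_⟩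
  · rw [interior_Ici_zero_diff]
    exact ⟨ha₀.trans_lt hx.1, Set.disjoint_left.1 hgap' hx⟩
  · rw [interior_Ici_zero_diff] at hsub
    have ha'_eq : a' = a :=
      ha'.eq_or_lt.resolve_right fun h => (hsub ⟨h, hab.trans_le hb'⟩).2 ha
    refine ⟨ha'_eq, (hb'.eq_or_lt.resolve_right fun h => ?_).symm⟩
    exact (hsub ⟨ha'_eq ▸ hab, h⟩).2 hb

theorem le_of_mem_of_disjoint_Ioo {F : Set ℝ} {u v x : ℝ} (hx : x ∈ F) (hux : u < x)
    (hgap : Disjoint (Ioo u v) F) : v ≤ x :=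
  not_lt.1 fun hxv => Set.disjoint_left.1 hgap ⟨hux, hxv⟩ hx

/-- For closed `F` and `t ∉ F`, `Ioo (gapLeft F t) (gapRight F t)` is the component of `Fᶜ`
containing `t` (provided `F` meets both `Iic t` and `Ici t`). -/
noncomputable def gapLeft (F : Set ℝ) (t : ℝ) : ℝ := sSup (F ∩ Iic t)

noncomputable def gapRight (F : Set ℝ) (t : ℝ) : ℝ := sInf (F ∩ Ici t)

section Gap

variable {F : Set ℝ} {s t x : ℝ}

theorem gapLeft_mem (hF : IsClosed F) (hne : (F ∩ Iic t).Nonempty) : gapLeft F t ∈ F ∩ Iic t :=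
  (hF.inter isClosed_Iic).csSup_mem hne (bddAbove_Iic.mono inter_subset_right)

theorem gapRight_mem (hF : IsClosed F) (hne : (F ∩ Ici t).Nonempty) : gapRight F t ∈ F ∩ Ici t :=
  (hF.inter isClosed_Ici).csInf_mem hne (bddBelow_Ici.mono inter_subset_right)

theorem le_gapLeft (hx : x ∈ F) (hxt : x ≤ t) : x ≤ gapLeft F t :=
  le_csSup (bddAbove_Iic.mono inter_subset_right) ⟨hx, hxt⟩

theorem gapRight_le (hx : x ∈ F) (htx : t ≤ x) : gapRight F t ≤ x :=
  csInf_le (bddBelow_Ici.mono inter_subset_right) ⟨hx, htx⟩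

theorem gapLeft_le (hne : (F ∩ Iic t).Nonempty) : gapLeft F t ≤ t :=
  csSup_le hne fun _ hx => hx.2

theorem gapLeft_mono (hne : (F ∩ Iic s).Nonempty) (hst : s ≤ t) : gapLeft F s ≤ gapLeft F t :=
  csSup_le_csSup (bddAbove_Iic.mono inter_subset_right) hne
    (inter_subset_inter_right F (Iic_subset_Iic.2 hst))

theorem disjoint_Ioo_gapLeft_gapRight (F : Set ℝ) (t : ℝ) :
    Disjoint (Ioo (gapLeft F t) (gapRight F t)) F := by
  refine Set.disjoint_left.2 fun x ⟨hlx, hxr⟩ hx => ?_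
  rcases le_total x t with hxt | htx
  · exact (le_gapLeft hx hxt).not_gt hlx
  · exact (gapRight_le hx htx).not_gt hxr

theorem gapLeft_lt_gapRight (hF : IsClosed F) (hlo : (F ∩ Iic t).Nonempty)
    (hhi : (F ∩ Ici t).Nonempty) (ht : t ∉ F) : gapLeft F t < gapRight F t :=
  calc gapLeft F t < t := (gapLeft_le hlo).lt_of_ne fun h => ht (h ▸ (gapLeft_mem hF hlo).1)
    _ ≤ gapRight F t := (gapRight_mem hF hhi).2

end Gap

theorem isCompExt_gap {E : Set ℝ} {t : ℝ} (hE : E ⊆ Ici 0) (hlo : (closure E ∩ Iic t).Nonempty)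
    (hhi : (closure E ∩ Ici t).Nonempty) (ht : t ∉ closure E) :
    IsCompExt E (gapLeft (closure E) t) (gapRight (closure E) t) := by
  have hEcl : closure E ⊆ Ici 0 := closure_minimal hE isClosed_Ici
  exact isCompExt_of_mem_closure (hEcl (gapLeft_mem isClosed_closure hlo).1)
    (gapLeft_lt_gapRight isClosed_closure hlo hhi ht) (gapLeft_mem isClosed_closure hlo).1
    (gapRight_mem isClosed_closure hhi).1
    ((disjoint_Ioo_gapLeft_gapRight _ t).mono_right subset_closure)

theorem tendsto_sub_div_self_nhds_one_iff {ι : Type*} {l : Filter ι} {a b : ι → ℝ}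
    (hb : ∀ i, b i ≠ 0) :
    Tendsto (fun i => (b i - a i) / b i) l (𝓝 1) ↔ Tendsto (fun i => a i / b i) l (𝓝 0) := by
  have hfun : (fun i => (b i - a i) / b i) = fun i => 1 - a i / b i := by
    funext i; rw [sub_div, div_self (hb i)]
  rw [hfun]
  constructor <;> intro h
  · simpa using (tendsto_const_nhds (x := (1 : ℝ))).sub h
  · simpa using (tendsto_const_nhds (x := (1 : ℝ))).sub h

theorem asymp_of_isBoundedUnder {x y : ℕ → ℝ} (hx : ∀ n, 0 < x n) (hy : ∀ n, 0 < y n)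
    (hyx : IsBoundedUnder (· ≤ ·) atTop fun n => y n / x n)
    (hxy : IsBoundedUnder (· ≤ ·) atTop fun n => x n / y n) : Asymp x y := by
  obtain ⟨M, hM⟩ := hyx.bddAbove_range
  obtain ⟨M', hM'⟩ := hxy.bddAbove_range
  have hD : 0 < max M' 0 + 1 := by positivity
  refine ⟨(max M' 0 + 1)⁻¹, max M 0 + 1, inv_pos.2 hD, by positivity, fun n => ⟨?_, ?_⟩⟩
  · have h : x n / y n < max M' 0 + 1 :=
      (hM' (mem_range_self n)).trans_lt (by linarith [le_max_left M' 0])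
    rw [div_lt_iff₀ (hy n)] at h
    rw [inv_mul_lt_iff₀ hD]
    linarith
  · have h : y n / x n < max M 0 + 1 :=
      (hM (mem_range_self n)).trans_lt (by linarith [le_max_left M 0])
    rwa [div_lt_iff₀ (hx n)] at h

theorem exists_forall_Ioo_inter_eq_empty_of_tporous {E : Set ℝ} {τ : ℕ → ℝ}
    (hτ : ∀ n, 0 < τ n) (h : TPorous E τ) :
    ∃ k : ℝ, 1 < k ∧ ∀ K : ℝ, k < K →
      ∃ N₁ : ℕ, ∀ n ≥ N₁, Ioo (k * τ n) (K * τ n) ∩ E = ∅ := by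
  obtain ⟨a, b, ⟨hcomp, -, -, hlim⟩, c₁, c₂, hc₁, -, hτa⟩ := h
  have ha : ∀ n, 0 < a n := fun n => (mul_pos hc₁ (hτ n)).trans (hτa n).1
  have hb : ∀ n, 0 < b n := fun n => (ha n).trans (hcomp n).1
  have hab : Tendsto (fun n => a n / b n) atTop (𝓝 0) :=
    (tendsto_sub_div_self_nhds_one_iff fun n => (hb n).ne').1 hlim
  refine ⟨max c₂ 2, by linarith [le_max_right c₂ 2], fun K hK => ?_⟩
  have hK : 0 < K := by linarith [le_max_right c₂ 2]
  obtain ⟨N₁, hN₁⟩ := eventually_atTop.1 (hab.eventually_lt_const (div_pos hc₁ hK))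
  refine ⟨N₁, fun n hn => disjoint_iff_inter_eq_empty.1 ((hcomp n).disjoint.mono_left ?_)⟩
  have hab_n : a n * K < c₁ * b n := (div_lt_div_iff₀ (hb n) hK).1 (hN₁ n hn)
  refine Ioo_subset_Ioo ?_ ?_
  · nlinarith [(hτa n).2, le_max_left c₂ 2, hτ n]
  · nlinarith [(hτa n).1]

theorem tporous_of_eventually_isCompExt {E : Set ℝ} {τ a b : ℕ → ℝ} {c : ℝ}
    (hτ : ∀ n, 0 < τ n) (hτ₀ : Tendsto τ atTop (𝓝 0))
    (hτa : ∀ n, τ n ≤ a n) (haτ : ∀ n, a n ≤ c * τ n)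
    (hcomp : ∀ᶠ n in atTop, IsCompExt E (a n) (b n)) (ha : EvDecr a)
    (hb : Tendsto (fun n => b n / τ n) atTop atTop) : TPorous E τ := by
  obtain ⟨N, hN⟩ := eventually_atTop.1 hcomp
  have hapos : ∀ n, 0 < a n := fun n => (hτ n).trans_le (hτa n)
  have ha₀ : Tendsto a atTop (𝓝 0) :=
    tendsto_of_tendsto_of_tendsto_of_le_of_le hτ₀ (by simpa using hτ₀.const_mul c) hτa haτ
  have hab : Tendsto (fun n => a n / b n) atTop (𝓝 0) := by
    refine squeeze_zero' ?_ ?_ (by simpa using hb.inv_tendsto_atTop.const_mul c)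
    · filter_upwards [hcomp] with n hn
      exact div_nonneg (hapos n).le ((hapos n).trans hn.1).le
    · filter_upwards [hcomp] with n hn
      rw [← mul_div_assoc]
      exact div_le_div_of_nonneg_right (haτ n) ((hapos n).trans hn.1).le
  -- Reindexing by `max n N` makes every interval a component while keeping all limits.
  set s : ℕ → ℕ := fun n => max n N
  have hs : Tendsto s atTop atTop := tendsto_atTop_mono (fun n => le_max_left n N) tendsto_id
  have hsn : ∀ᶠ n in atTop, s n = n := (eventually_ge_atTop N).mono fun n hn => max_eq_left hn
  have hcomp_s : ∀ n, IsCompExt E (a (s n)) (b (s n)) := fun n => hN _ (le_max_right n N)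
  refine ⟨a ∘ s, b ∘ s, ⟨hcomp_s, ?_, ha₀.comp hs, ?_⟩, ?_⟩
  · filter_upwards [ha, hsn, eventually_ge_atTop N] with n hn hsn hnN
    simpa [Function.comp, hsn, s, max_eq_left (hnN.trans n.le_succ)] using hn
  · exact (tendsto_sub_div_self_nhds_one_iff fun n =>
      ((hapos _).trans (hcomp_s n).1).ne').2 (hab.comp hs)
  · refine asymp_of_isBoundedUnder hτ (fun n => hapos _) (isBoundedUnder_of_eventually_le
      (a := c) ?_) (isBoundedUnder_of_eventually_le (a := 1) ?_)
    · filter_upwards [hsn] with n hn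
      simpa [hn, div_le_iff₀ (hτ n)] using haτ n
    · filter_upwards [hsn] with n hn
      simpa [hn, div_le_one (hapos n)] using hτa n

theorem tporous_of_forall_Ioo_inter_eq_empty {E : Set ℝ} {τ : ℕ → ℝ} {k : ℝ}
    (hE : E ⊆ Ici 0) (hτ : τ ∈ E0d E) (hτpos : ∀ n, 0 < τ n) (hk : 0 ≤ k)
    (H : ∀ K : ℝ, k < K → ∃ N₁ : ℕ, ∀ n ≥ N₁, Ioo (k * τ n) (K * τ n) ∩ E = ∅) :
    TPorous E τ := by
  obtain ⟨hτdec, hτE, hτ₀⟩ := hτ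
  set F := closure E
  have hτF : ∀ n, τ n ∈ F := fun n => subset_closure (hτE n).1
  have hgap : ∀ K, k < K → ∀ᶠ n in atTop, Disjoint (Ioo (k * τ n) (K * τ n)) F := fun K hK =>
    let ⟨N₁, hN₁⟩ := H K hK
    eventually_atTop.2 ⟨N₁, fun n hn =>
      (disjoint_iff_inter_eq_empty.2 (hN₁ n hn)).closure_right isOpen_Ioo⟩
  -- The gaps are taken around `(k + 1) τₙ`, the midpoint of the empty band `(k τₙ, (k + 2) τₙ)`.
  have hlo : ∀ n, (F ∩ Iic ((k + 1) * τ n)).Nonempty := fun n =>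
    ⟨τ n, hτF n, mem_Iic.2 (by nlinarith [hτpos n])⟩
  have hhi : ∀ᶠ n in atTop, (F ∩ Ici ((k + 1) * τ n)).Nonempty := by
    filter_upwards [(by simpa using hτ₀.const_mul (k + 1) :
      Tendsto (fun n => (k + 1) * τ n) atTop (𝓝 0)).eventually_le_const (hτpos 0)] with n hn
    exact ⟨τ 0, hτF 0, hn⟩
  refine tporous_of_eventually_isCompExt (b := fun n => gapRight F ((k + 1) * τ n)) hτpos hτ₀
    (fun n => le_gapLeft (hτF n) (by nlinarith [hτpos n])) (fun n => gapLeft_le (hlo n)) ?_ ?_ ?_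
  · filter_upwards [hhi, hgap (k + 2) (by linarith)] with n hhin hgapn
    refine isCompExt_gap hE (hlo n) hhin fun hmem => Set.disjoint_left.1 hgapn ?_ hmem
    constructor <;> nlinarith [hτpos n]
  · filter_upwards [hτdec] with n hn
    exact gapLeft_mono (hlo (n + 1)) (by gcongr)
  · refine tendsto_atTop.2 fun K => ?_
    filter_upwards [hhi, hgap (max K (k + 2)) (by linarith [le_max_right K (k + 2)])]
      with n hhin hgapn
    have hmem := gapRight_mem isClosed_closure hhin
    have hle := le_of_mem_of_disjoint_Ioo hmem.1 (by nlinarith [mem_Ici.1 hmem.2, hτpos n]) hgapn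
    rw [le_div_iff₀ (hτpos n)]
    nlinarith [le_max_left K (k + 2), hτpos n]

/-- `E` is `τ`-strongly porous at `0` iff there is `k ∈ (1,∞)` such that
for all `K ∈ (k,∞)` eventually `(kτₙ, Kτₙ) ∩ E = ∅`. -/
theorem stmt_4 (E : Set ℝ) (hE : E ⊆ Ici 0) (τ : ℕ → ℝ) (hτ : τ ∈ E0d E) :
    TPorous E τ ↔
      ∃ k : ℝ, 1 < k ∧ ∀ K : ℝ, k < K →
        ∃ N₁ : ℕ, ∀ n ≥ N₁, Ioo (k * τ n) (K * τ n) ∩ E = ∅ := by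
  have hτpos : ∀ n, 0 < τ n := fun n =>
    (hE (hτ.2.1 n).1).lt_of_ne fun h => (hτ.2.1 n).2 h.symm
  refine ⟨exists_forall_Ioo_inter_eq_empty_of_tporous hτpos, fun ⟨k, hk, H⟩ => ?_⟩
  exact tporous_of_forall_Ioo_inter_eq_empty hE hτ hτpos (by linarith) H
end

section
/- Let E ⊆ [0,∞). Then E ∪ A is completely strongly porous at 0 for every completely strongly porous at 0 set A ⊆ [0,∞) if and only if 0 is not an accumulation point of E. -/
open Filter Topology Set
open scoped ENNReal

/-!
If `E` has no points in `(0, ε)`, a sequence in `E ∪ A` tending to `0` eventually lies in `A`, and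
each gap `(aₙ, bₙ)` of `A` witnessing porosity along it can be cut at the first point of `E` to the
right of `aₙ`; that point stays beyond `ε`, so the shortened gaps still have relative length
tending to `1`.

If `0` is an accumulation point of `E`, pick `eₙ ∈ E` decreasing super-exponentially and let `A`
be the range of `lₙ = eₙ / 2 ^ sₙ` with `sₙ = (Nat.unpair n).1`, which takes every value infinitely
often. Consecutive ratios of `l` tend to `0`, which makes `A` completely strongly porous. But if
gaps `(aₙ, bₙ)` of `E ∪ A` satisfied `c₁ lₙ < aₙ < c₂ lₙ`, then at the infinitely many `n` with
`2 ^ sₙ > c₂` the gap would end by `eₙ = 2 ^ sₙ lₙ`, so `aₙ / bₙ ≥ c₁ / 2 ^ sₙ` would not tend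
to `0`.
-/

lemma EvDecr.congr {u v : ℕ → ℝ} (hu : EvDecr u) (huv : u =ᶠ[atTop] v) : EvDecr v := by
  filter_upwards [hu, huv, (tendsto_add_atTop_nat 1).eventually huv] with n hn h₀ h₁
  rwa [← h₀, ← h₁]

lemma eventuallyEq_comp_max (u : ℕ → ℝ) (M : ℕ) : (fun n => u (max n M)) =ᶠ[atTop] u := by
  filter_upwards [eventually_ge_atTop M] with n hn
  rw [max_eq_left hn]

lemma tendsto_sub_div_self_iff {a b : ℕ → ℝ} (hb : ∀ᶠ n in atTop, b n ≠ 0) :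
    Tendsto (fun n => (b n - a n) / b n) atTop (𝓝 1) ↔
      Tendsto (fun n => a n / b n) atTop (𝓝 0) := by
  have hEq : (fun n => 1 - a n / b n) =ᶠ[atTop] fun n => (b n - a n) / b n := by
    filter_upwards [hb] with n hn
    rw [sub_div, div_self hn]
  rw [← tendsto_congr' hEq]
  constructor <;> intro h <;> simpa using (tendsto_const_nhds (x := (1 : ℝ))).sub h

lemma asymp_of_eventually {x y : ℕ → ℝ} (hx : ∀ n, 0 < x n) (hy : ∀ n, 0 < y n) {c₁ c₂ : ℝ}
    (hc₁ : 0 < c₁) (hc₂ : 0 < c₂) (h : ∀ᶠ n in atTop, c₁ * x n < y n ∧ y n < c₂ * x n) :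
    Asymp x y := by
  obtain ⟨N, hN⟩ := eventually_atTop.1 h
  have hne : (Finset.range (N + 1)).Nonempty := Finset.nonempty_range_add_one
  set m := (Finset.range (N + 1)).inf' hne fun n => y n / x n
  set M := (Finset.range (N + 1)).sup' hne fun n => y n / x n
  have hm : 0 < m := (Finset.lt_inf'_iff hne).2 fun n _ => div_pos (hy n) (hx n)
  refine ⟨min c₁ (m / 2), max c₂ (2 * M), by positivity, by positivity, fun n => ?_⟩
  rcases le_or_gt N n with hn | hn
  · obtain ⟨h₁, h₂⟩ := hN n hn
    constructor
    · calc min c₁ (m / 2) * x n ≤ c₁ * x n := mul_le_mul_of_nonneg_right (min_le_left _ _) (hx n).le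
        _ < y n := h₁
    · calc y n < c₂ * x n := h₂
        _ ≤ max c₂ (2 * M) * x n := mul_le_mul_of_nonneg_right (le_max_left _ _) (hx n).le
  · have hmem : n ∈ Finset.range (N + 1) := Finset.mem_range.2 (by omega)
    have hmn : m ≤ y n / x n := Finset.inf'_le _ hmem
    have hMn : y n / x n ≤ M := Finset.le_sup' (fun n => y n / x n) hmem
    have hxn := hx n
    have hyn := hy n
    rw [le_div_iff₀ hxn] at hmn
    rw [div_le_iff₀ hxn] at hMn
    constructor
    · calc min c₁ (m / 2) * x n ≤ m / 2 * x n := by gcongr; exact min_le_right _ _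
        _ < y n := by nlinarith
    · calc y n < 2 * M * x n := by nlinarith
        _ ≤ max c₂ (2 * M) * x n := by gcongr; exact le_max_right _ _

section Components

variable {X : Set ℝ} {a b : ℝ}

lemma isCompExt_iff : IsCompExt X a b ↔ a < b ∧ Ioo a b ⊆ interior (Ici 0 \ X) ∧
    a ∉ interior (Ici 0 \ X) ∧ b ∉ interior (Ici 0 \ X) := by
  set U := interior (Ici 0 \ X)
  constructor
  · rintro ⟨hab, hsub, hmax⟩
    refine ⟨hab, hsub, fun ha => ?_, fun hb => ?_⟩
    · obtain ⟨δ, hδ, hball⟩ := Metric.isOpen_iff.1 isOpen_interior a ha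
      rw [Real.ball_eq_Ioo] at hball
      have hext : Ioo (a - δ) b ⊆ U := fun x hx =>
        if h : x < a + δ then hball ⟨hx.1, h⟩ else hsub ⟨by linarith, hx.2⟩
      linarith [(hmax _ _ (by linarith) le_rfl hext).1]
    · obtain ⟨δ, hδ, hball⟩ := Metric.isOpen_iff.1 isOpen_interior b hb
      rw [Real.ball_eq_Ioo] at hball
      have hext : Ioo a (b + δ) ⊆ U := fun x hx =>
        if h : x < b then hsub ⟨hx.1, h⟩ else hball ⟨by linarith, hx.2⟩
      linarith [(hmax _ _ le_rfl (by linarith) hext).2]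
  · rintro ⟨hab, hsub, ha, hb⟩
    refine ⟨hab, hsub, fun a' b' ha' hb' hsub' => ⟨?_, ?_⟩⟩
    · by_contra hne
      exact ha (hsub' ⟨lt_of_le_of_ne ha' hne, hab.trans_le hb'⟩)
    · by_contra hne
      exact hb (hsub' ⟨ha'.trans_lt hab, lt_of_le_of_ne hb' (Ne.symm hne)⟩)

lemma IsCompExt.subset_compl (h : IsCompExt X a b) : Ioo a b ⊆ Ici 0 \ X :=
  h.2.1.trans interior_subset

lemma IsCompExt.nonneg_s5 (h : IsCompExt X a b) : 0 ≤ a := by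
  by_contra! ha
  have hmid : (a + min b 0) / 2 ∈ Ioo a b :=
    ⟨by linarith [lt_min h.1 ha], by linarith [lt_min h.1 ha, min_le_left b 0]⟩
  have h0 : 0 ≤ (a + min b 0) / 2 := (h.subset_compl hmid).1
  linarith [min_le_right b 0]

lemma IsCompExt.le_of_mem (h : IsCompExt X a b) {x : ℝ} (hx : x ∈ X) (hax : a < x) : b ≤ x :=
  not_lt.1 fun hxb => (h.subset_compl ⟨hax, hxb⟩).2 hx

lemma isCompExt_range_of_strictAnti {l : ℕ → ℝ} (hpos : ∀ n, 0 < l n) (hl : StrictAnti l)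
    (k : ℕ) : IsCompExt (range l) (l (k + 1)) (l k) := by
  have hnot : ∀ j, l j ∉ interior (Ici 0 \ range l) := fun j hj =>
    (interior_subset hj).2 (mem_range_self j)
  refine isCompExt_iff.2 ⟨hl (Nat.lt_succ_self k), interior_maximal ?_ isOpen_Ioo, hnot _, hnot _⟩
  rintro x ⟨hx₁, hx₂⟩
  refine ⟨(hpos _).le.trans hx₁.le, ?_⟩
  rintro ⟨j, rfl⟩
  rcases le_or_gt j k with hj | hj
  · exact hx₂.not_ge (hl.antitone hj)
  · exact hx₁.not_ge (hl.antitone (Nat.succ_le_of_lt hj))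

lemma IsCompExt.union_sInf {A E : Set ℝ} (h : IsCompExt A a b)
    (hac : a < sInf (insert b (E ∩ Ioi a))) :
    IsCompExt (E ∪ A) a (sInf (insert b (E ∩ Ioi a))) := by
  set S := insert b (E ∩ Ioi a)
  obtain ⟨hab, hsub, ha, hb⟩ := isCompExt_iff.1 h
  have hmono : interior (Ici 0 \ (E ∪ A)) ⊆ interior (Ici 0 \ A) :=
    interior_mono (sdiff_subset_sdiff_right subset_union_right)
  have hbdd : BddBelow S := ⟨a, by
    rintro x (rfl | ⟨-, hx⟩)
    exacts [hab.le, le_of_lt hx]⟩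
  have hSb : sInf S ≤ b := csInf_le hbdd (mem_insert b _)
  have hS : S ⊆ (interior (Ici 0 \ (E ∪ A)))ᶜ := by
    rintro x (rfl | ⟨hxE, -⟩) hx
    exacts [hb (hmono hx), (interior_subset hx).2 (Or.inl hxE)]
  refine isCompExt_iff.2 ⟨hac, interior_maximal ?_ isOpen_Ioo, fun h' => ha (hmono h'),
    closure_minimal hS isOpen_interior.isClosed_compl
      (csInf_mem_closure (insert_nonempty _ _) hbdd)⟩
  rintro x ⟨hax, hxc⟩
  obtain ⟨hx0, hxA⟩ := interior_subset (hsub ⟨hax, hxc.trans_le hSb⟩)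
  refine ⟨hx0, ?_⟩
  rintro (hxE | hxA')
  · exact hxc.not_ge (csInf_le hbdd (mem_insert_of_mem _ ⟨hxE, hax⟩))
  · exact hxA hxA'

end Components

lemma tPorous_of_eventually {E : Set ℝ} {τ a b : ℕ → ℝ} (hτ : ∀ n, 0 < τ n)
    (hcomp : ∀ᶠ n in atTop, IsCompExt E (a n) (b n)) (hdec : EvDecr a)
    (ha : Tendsto a atTop (𝓝 0)) (hratio : Tendsto (fun n => (b n - a n) / b n) atTop (𝓝 1))
    {c₁ c₂ : ℝ} (hc₁ : 0 < c₁) (hc₂ : 0 < c₂)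
    (hbd : ∀ᶠ n in atTop, c₁ * τ n < a n ∧ a n < c₂ * τ n) : TPorous E τ := by
  obtain ⟨M, hM⟩ := eventually_atTop.1 (hcomp.and hbd)
  have ha' := eventuallyEq_comp_max a M
  have hb' := eventuallyEq_comp_max b M
  refine ⟨fun n => a (max n M), fun n => b (max n M),
    ⟨fun n => (hM _ (le_max_right n M)).1, hdec.congr ha'.symm, ha.congr' ha'.symm,
      hratio.congr' (by filter_upwards [ha', hb'] with n h₁ h₂; rw [h₁, h₂])⟩,
    asymp_of_eventually hτ (fun n => ?_) hc₁ hc₂ ?_⟩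
  · exact (mul_pos hc₁ (hτ _)).trans (hM _ (le_max_right n M)).2.1
  · filter_upwards [hbd, ha'] with n hn h
    rwa [h]

/-- Each `τ n = l k` is itself the left end of the gap `(l k, l (k - 1))`, whose relative length
tends to `1`. -/
lemma csp_range_of_ratio_tendsto_zero {l : ℕ → ℝ} (hpos : ∀ n, 0 < l n) (hl : StrictAnti l)
    (hrat : Tendsto (fun n => l (n + 1) / l n) atTop (𝓝 0)) : CSP (range l) := by
  rintro τ ⟨hdec, hmem, hτ0⟩
  choose g hg using fun n => (hmem n).1
  have hg_top : Tendsto g atTop atTop := tendsto_atTop.2 fun K => by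
    filter_upwards [hτ0.eventually_lt_const (hpos K)] with n hn
    rw [← hg n] at hn
    exact (hl.lt_iff_gt.1 hn).le
  have hτ : ∀ n, 0 < τ n := fun n => hg n ▸ hpos (g n)
  have hshift : ∀ᶠ n in atTop, g n - 1 + 1 = g n := by
    filter_upwards [hg_top.eventually_ge_atTop 1] with n hn
    omega
  refine tPorous_of_eventually hτ (b := fun n => l (g n - 1)) ?_ hdec hτ0 ?_ (c₁ := 1 / 2) (c₂ := 2)
    (by norm_num) (by norm_num) (Eventually.of_forall fun n => by constructor <;> linarith [hτ n])
  · filter_upwards [hshift] with n hn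
    simpa only [hn, hg] using isCompExt_range_of_strictAnti hpos hl (g n - 1)
  · rw [tendsto_sub_div_self_iff (Eventually.of_forall fun n => (hpos _).ne')]
    refine (hrat.comp ((tendsto_sub_atTop_nat 1).comp hg_top)).congr' ?_
    filter_upwards [hshift] with n hn
    simp only [Function.comp_apply, hn, hg]

lemma tendsto_zero_of_ratio_tendsto_zero {l : ℕ → ℝ} (hpos : ∀ n, 0 < l n)
    (hrat : Tendsto (fun n => l (n + 1) / l n) atTop (𝓝 0)) : Tendsto l atTop (𝓝 0) := by
  refine (summable_of_ratio_test_tendsto_lt_one zero_lt_one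
    (Eventually.of_forall fun n => (hpos n).ne') ?_).tendsto_atTop_zero
  simpa only [Real.norm_eq_abs, abs_of_pos (hpos _)] using hrat

lemma accPt_zero_iff_of_subset_Ici {E : Set ℝ} (hE : E ⊆ Ici 0) :
    AccPt 0 (𝓟 E) ↔ ∀ δ > 0, ∃ y ∈ E, 0 < y ∧ y < δ := by
  rw [accPt_iff_nhds]
  constructor
  · intro h δ hδ
    obtain ⟨y, ⟨hyδ, hyE⟩, hy0⟩ := h (Iio δ) (Iio_mem_nhds hδ)
    exact ⟨y, hyE, lt_of_le_of_ne (hE hyE) (Ne.symm hy0), hyδ⟩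
  · intro h U hU
    obtain ⟨δ, hδ, hball⟩ := Metric.mem_nhds_iff.1 hU
    obtain ⟨y, hyE, hy0, hyδ⟩ := h δ hδ
    refine ⟨y, ⟨hball ?_, hyE⟩, hy0.ne'⟩
    rw [Real.ball_eq_Ioo]
    constructor <;> linarith

lemma csp_union_of_forall_pos_le {E A : Set ℝ} (hE : E ⊆ Ici 0) (hA : A ⊆ Ici 0) {ε : ℝ}
    (hε : 0 < ε) (hεE : ∀ x ∈ E, 0 < x → ε ≤ x) (hAcsp : CSP A) : CSP (E ∪ A) := by
  rintro τ ⟨hdec, hmem, hτ0⟩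
  have hτ : ∀ n, 0 < τ n := fun n => lt_of_le_of_ne
    ((hmem n).1.elim (fun h => hE h) (fun h => hA h)) (Ne.symm (hmem n).2)
  have hτA : ∀ᶠ n in atTop, τ n ∈ A := by
    filter_upwards [hτ0.eventually_lt_const hε] with n hn
    exact (hmem n).1.resolve_left fun hE' => hn.not_ge (hεE _ hE' (hτ n))
  obtain ⟨N, hN⟩ := eventually_atTop.1 hτA
  have hστ := eventuallyEq_comp_max τ N
  obtain ⟨a, b, ⟨hcomp, hadec, ha0, hratio⟩, c₁, c₂, hc₁, hc₂, hbd⟩ := hAcsp _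
    ⟨hdec.congr hστ.symm, fun n => ⟨hN _ (le_max_right n N), (hmem _).2⟩, hτ0.congr' hστ.symm⟩
  have ha : ∀ n, 0 < a n := fun n => (mul_pos hc₁ (hτ _)).trans (hbd n).1
  set c := fun n => sInf (insert (b n) (E ∩ Ioi (a n)))
  -- points of `E` to the right of `a n ≥ 0` lie beyond `ε`
  have hc : ∀ n, min (b n) ε ≤ c n := fun n => le_csInf (insert_nonempty _ _) <| by
    rintro x (rfl | ⟨hxE, hx⟩)
    exacts [min_le_left _ _, (min_le_right _ _).trans (hεE x hxE ((ha n).trans hx))]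
  have hac : ∀ᶠ n in atTop, a n < c n := by
    filter_upwards [ha0.eventually_lt_const hε] with n hn
    exact (lt_min (hcomp n).1 hn).trans_le (hc n)
  refine tPorous_of_eventually hτ (hac.mono fun n h => (hcomp n).union_sInf h) hadec ha0 ?_ hc₁ hc₂
    (by filter_upwards [hστ] with n hn; rw [← hn]; exact hbd n)
  have hb : ∀ n, 0 < b n := fun n => (ha n).trans (hcomp n).1
  rw [tendsto_sub_div_self_iff (hac.mono fun n h => ((ha n).trans h).ne')]
  rw [tendsto_sub_div_self_iff (Eventually.of_forall fun n => (hb n).ne')] at hratio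
  refine squeeze_zero' (hac.mono fun n h => (div_pos (ha n) ((ha n).trans h)).le)
    (Eventually.of_forall fun n => ?_) (by simpa using hratio.add (ha0.div_const ε))
  calc a n / c n ≤ a n / min (b n) ε :=
        div_le_div_of_nonneg_left (ha n).le (lt_min (hb n) hε) (hc n)
    _ ≤ a n / b n + a n / ε := by
      rcases min_choice (b n) ε with h | h <;> rw [h] <;>
        linarith [div_pos (ha n) (hb n), div_pos (ha n) hε]

lemma exists_seq_mem_lt {E : Set ℝ} (hE : ∀ δ > 0, ∃ y ∈ E, 0 < y ∧ y < δ) (g : ℕ → ℝ → ℝ)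
    (hg : ∀ n x, 0 < x → 0 < g n x) :
    ∃ e : ℕ → ℝ, ∀ n, e n ∈ E ∧ 0 < e n ∧ e (n + 1) < g n (e n) := by
  choose f hfE hfpos hflt using hE
  let e' : ℕ → {x : ℝ // 0 < x} := fun n => Nat.rec ⟨f 1 one_pos, hfpos _ _⟩
    (fun k x => ⟨f (g k x) (hg k x x.2), hfpos _ _⟩) n
  have hmem : ∀ n, (e' n).1 ∈ E := by
    rintro (_ | n)
    exacts [hfE _ _, hfE _ _]
  exact ⟨fun n => (e' n).1, fun n => ⟨hmem n, (e' n).2, hflt _ _⟩⟩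

lemma not_csp_union_range {E : Set ℝ} {e l : ℕ → ℝ} (he : ∀ n, e n ∈ E) (hpos : ∀ n, 0 < l n)
    (hl : StrictAnti l) (hl0 : Tendsto l atTop (𝓝 0))
    (hel : ∀ n, e n = 2 ^ (Nat.unpair n).1 * l n) :
    ¬ CSP (E ∪ range l) := by
  intro h
  obtain ⟨a, b, ⟨hcomp, -, -, hratio⟩, c₁, c₂, hc₁, -, hbd⟩ := h l
    ⟨Eventually.of_forall fun n => (hl n.lt_succ_self).le,
      fun n => ⟨Or.inr (mem_range_self n), (hpos n).ne'⟩, hl0⟩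
  have hb : ∀ n, 0 < b n := fun n => ((mul_pos hc₁ (hpos n)).trans (hbd n).1).trans (hcomp n).1
  rw [tendsto_sub_div_self_iff (Eventually.of_forall fun n => (hb n).ne')] at hratio
  obtain ⟨s, hs⟩ := pow_unbounded_of_one_lt c₂ (one_lt_two (α := ℝ))
  obtain ⟨N, hN⟩ := eventually_atTop.1 (hratio.eventually_lt_const (by positivity : 0 < c₁ / 2 ^ s))
  set n := Nat.pair s N
  have hen : e n = 2 ^ s * l n := by rw [hel, Nat.unpair_pair]
  have hbe : b n ≤ e n := (hcomp n).le_of_mem (Or.inl (he n)) <| calc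
    a n < c₂ * l n := (hbd n).2
    _ < 2 ^ s * l n := mul_lt_mul_of_pos_right hs (hpos n)
    _ = e n := hen.symm
  refine (hN n (Nat.right_le_pair s N)).not_ge ?_
  rw [le_div_iff₀ (hb n)]
  calc c₁ / 2 ^ s * b n ≤ c₁ / 2 ^ s * e n := by gcongr
    _ = c₁ * l n := by rw [hen]; field_simp
    _ ≤ a n := (hbd n).1.le

lemma exists_csp_not_csp_union {E : Set ℝ} (hE : ∀ δ > 0, ∃ y ∈ E, 0 < y ∧ y < δ) :
    ∃ A ⊆ Ici 0, CSP A ∧ ¬ CSP (E ∪ A) := by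
  obtain ⟨e, he⟩ :=
    exists_seq_mem_lt hE (fun n x => x / 2 ^ (2 * n + 1)) fun n x hx => by positivity
  set l : ℕ → ℝ := fun n => e n / 2 ^ (Nat.unpair n).1
  have hpos : ∀ n, 0 < l n := fun n => div_pos (he n).2.1 (by positivity)
  have hstep : ∀ n, l (n + 1) < (1 / 2) ^ (n + 1) * l n := fun n => calc
    l (n + 1) ≤ e (n + 1) := div_le_self (he _).2.1.le (one_le_pow₀ one_le_two)
    _ < e n / 2 ^ (2 * n + 1) := (he n).2.2
    _ = (1 / 2) ^ (n + 1) * (e n / 2 ^ n) := by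
      rw [one_div, inv_pow, ← div_eq_inv_mul, div_div, ← pow_add]
      ring_nf
    _ ≤ (1 / 2) ^ (n + 1) * (e n / 2 ^ (Nat.unpair n).1) := by
      gcongr
      exacts [(he n).2.1.le, one_le_two, Nat.unpair_left_le n]
  have hl : StrictAnti l := strictAnti_nat_of_succ_lt fun n =>
    (hstep n).trans_le (mul_le_of_le_one_left (hpos n).le (pow_le_one₀ (by norm_num) (by norm_num)))
  have hrat : Tendsto (fun n => l (n + 1) / l n) atTop (𝓝 0) := by
    refine squeeze_zero (fun n => (div_pos (hpos _) (hpos n)).le) (fun n => ?_)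
      ((tendsto_pow_atTop_nhds_zero_of_lt_one (by norm_num) (by norm_num : (1 / 2 : ℝ) < 1)).comp
        (tendsto_add_atTop_nat 1))
    rw [div_le_iff₀ (hpos n)]
    exact (hstep n).le
  refine ⟨range l, range_subset_iff.2 fun n => (hpos n).le,
    csp_range_of_ratio_tendsto_zero hpos hl hrat, not_csp_union_range (fun n => (he n).1) hpos hl
      (tendsto_zero_of_ratio_tendsto_zero hpos hrat) fun n => ?_⟩
  simp only [l]
  field_simp

/-- `E ∪ A` is completely strongly porous at `0` for every completely
strongly porous at `0` set `A ⊆ [0,∞)` iff `0` is not an accumulation point of `E`. -/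
theorem stmt_5 (E : Set ℝ) (hE : E ⊆ Ici 0) :
    (∀ A : Set ℝ, A ⊆ Ici 0 → CSP A → CSP (E ∪ A)) ↔
      ¬ AccPt (0 : ℝ) (Filter.principal E) := by
  rw [accPt_zero_iff_of_subset_Ici hE]
  constructor
  · intro hunion hacc
    obtain ⟨A, hA, hAcsp, hnot⟩ := exists_csp_not_csp_union hacc
    exact hnot (hunion A hA hAcsp)
  · intro hiso A hA hAcsp
    push Not at hiso
    obtain ⟨ε, hε, hεE⟩ := hiso
    exact csp_union_of_forall_pos_le hE hA hε hεE hAcsp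
end

section
/- Let (X,d,p) be a pointed metric space. The following statements are equivalent: (i) there is a constant C < ∞ such that for every scaling sequence (r_n) and every sequence (x_n) of points of X for which the finite limit lim_{n→∞} d(x_n,p)/r_n exists, this limit is at most C; (ii) p is an isolated point of X. (Statement (i) expresses that the family of all pretangent spaces to X at p is uniformly bounded, since the distance in a pretangent space from the marked point π(p̃) to π(x̃) equals lim_{n→∞} d(x_n,p)/r_n.) -/
/-!
A finite limit of `d(xₙ,p)/rₙ` forces `d(xₙ,p) = (d(xₙ,p)/rₙ)·rₙ → 0`; if `p` is isolated this
means `xₙ = p` eventually, so the limit is `0`. If `p` is not isolated, pick `xₙ → p` with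
`xₙ ≠ p` and rescale by `rₙ = d(xₙ,p)/M`: every `M > 0` is then attained as such a limit.
-/

open Filter Topology Set
open scoped ENNReal

theorem exists_scalingSeq_dist_div_eq_of_neBot {X : Type*} [MetricSpace X] {p : X}
    (hp : (𝓝[≠] p).NeBot) {M : ℝ} (hM : 0 < M) :
    ∃ (r : ℕ → ℝ) (x : ℕ → X), ScalingSeq r ∧ ∀ n, dist (x n) p / r n = M := by
  obtain ⟨x, hxp, hx⟩ := mem_closure_iff_seq_limit.1 (mem_closure_iff_nhdsWithin_neBot.2 hp)
  have hd : ∀ n, 0 < dist (x n) p := fun n => dist_pos.2 (hxp n)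
  refine ⟨fun n => dist (x n) p / M, x, ⟨fun n => div_pos (hd n) hM, ?_⟩, fun n => ?_⟩
  · simpa using (tendsto_iff_dist_tendsto_zero.1 hx).div_const M
  · field_simp [(hd n).ne']

theorem tendsto_of_tendsto_dist_div {X : Type*} [MetricSpace X] {p : X} {r : ℕ → ℝ}
    {x : ℕ → X} {L : ℝ} (hr : ScalingSeq r)
    (hL : Tendsto (fun n => dist (x n) p / r n) atTop (𝓝 L)) :
    Tendsto x atTop (𝓝 p) := by
  refine tendsto_iff_dist_tendsto_zero.2 ?_
  have hdist : (fun n => dist (x n) p) = fun n => dist (x n) p / r n * r n :=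
    funext fun n => (div_mul_cancel₀ _ (hr.1 n).ne').symm
  simpa [hdist] using hL.mul hr.2

theorem eq_zero_of_tendsto_dist_div_of_isolated {X : Type*} [MetricSpace X] {p : X}
    (hp : 𝓝[≠] p = ⊥) {r : ℕ → ℝ} {x : ℕ → X} {L : ℝ} (hr : ScalingSeq r)
    (hL : Tendsto (fun n => dist (x n) p / r n) atTop (𝓝 L)) : L = 0 := by
  have hx : ∀ᶠ n in atTop, x n = p :=
    tendsto_of_tendsto_dist_div hr hL <|
      (isOpen_singleton_iff_punctured_nhds p).2 hp |>.mem_nhds rfl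
  refine tendsto_nhds_unique hL (tendsto_const_nhds.congr' ?_)
  filter_upwards [hx] with n hn
  simp [hn]

/-- There is a finite constant `C` bounding all limits
`lim d(xₙ,p)/rₙ` (over all scaling sequences and sequences for which the finite limit
exists) iff `p` is an isolated point of `X`. -/
theorem stmt_6 {X : Type*} [MetricSpace X] (p : X) :
    (∃ C : ℝ, ∀ (r : ℕ → ℝ) (x : ℕ → X) (L : ℝ), ScalingSeq r →
        Tendsto (fun n => dist (x n) p / r n) atTop (𝓝 L) → L ≤ C) ↔
      𝓝[≠] p = ⊥ := by
  constructor
  · rintro ⟨C, hC⟩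
    by_contra hp
    obtain ⟨r, x, hr, hM⟩ :=
      exists_scalingSeq_dist_div_eq_of_neBot ⟨hp⟩ (by positivity : 0 < max C 0 + 1)
    have hle := hC r x _ hr (by simpa only [hM] using tendsto_const_nhds)
    linarith [le_max_left C 0]
  · exact fun hp => ⟨0, fun r x L hr hL => (eq_zero_of_tendsto_dist_div_of_isolated hp hr hL).le⟩
end

section
/- Let (X,d,p) be a pointed metric space. Then: (i1) if (r_n) is a scaling sequence and F is a self-stable family w.r.t. (r_n) containing p̃, and there exist x̃ = (x_n), ỹ = (y_n) ∈ F with lim_{n→∞} d(x_n,y_n)/r_n > 0, then there exist c > 0 and a strictly increasing sequence (n_k) of natural numbers such that (c·r_{n_k})_{k∈ℕ} is a normal scaling sequence for (X,d,p); (i2) if (x_n) is a sequence of points of X, (r_n) is a scaling sequence, and lim_{n→∞} d(x_n,p)/r_n = 1, then there exists a strictly increasing sequence (n_k) of natural numbers such that (d(x_{n_k},p))_{k∈ℕ} is decreasing; (i3) if (r_n) is a normal scaling sequence for (X,d,p), then there exists a sequence (x_n) of points of X such that lim_{n→∞} d(x_n,p)/r_n = 1 and (d(x_n,p))_{n∈ℕ}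 is eventually decreasing. -/
open Filter Topology Set
open scoped ENNReal

/-!
Everything reduces to elementary facts about real sequences. For (i1), the triangle inequality
through `p` shows that `x` or `y` stays at a positive rescaled distance `A` from `p`; rescaling
`r` by `A` and passing to an antitone subsequence of `r` gives a normal scaling sequence.
For (i2), `d(xₙ,p)` is eventually positive and tends to `0`, and by the infinitary
Erdős–Szekeres theorem such a sequence has an antitone subsequence. For (i3), replace the
witness `xₙ` by the point `x_{mₙ}` minimising `d(x_k,p)` over `N ≤ k ≤ n`: then
`d(x_{mₙ},p) ≤ d(xₙ,p)` and `rₙ ≤ r_{mₙ}`, which squeezes the new ratio between the old one along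
`mₙ → ∞` and the old one itself.
-/

section Order

variable {α : Type*} [LinearOrder α]

theorem exists_argmin_Icc (s : ℕ → α) (N : ℕ) :
    ∃ m : ℕ → ℕ, ∀ n ≥ N, m n ∈ Finset.Icc N n ∧ ∀ k ∈ Finset.Icc N n, s (m n) ≤ s k := by
  have h : ∀ n, ∃ j, N ≤ n → j ∈ Finset.Icc N n ∧ ∀ k ∈ Finset.Icc N n, s j ≤ s k := by
    intro n
    by_cases hn : N ≤ n
    · obtain ⟨j, hj, hmin⟩ := (Finset.Icc N n).exists_min_image s (Finset.nonempty_Icc.2 hn)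
      exact ⟨j, fun _ => ⟨hj, hmin⟩⟩
    · exact ⟨0, fun h => absurd h hn⟩
  choose m hm using h
  exact ⟨m, hm⟩

variable [TopologicalSpace α] [OrderClosedTopology α]

theorem Filter.Tendsto.exists_antitone_subseq {f : ℕ → α} {a : α}
    (hf : Tendsto f atTop (𝓝 a)) (ha : ∀ᶠ n in atTop, a < f n) :
    ∃ φ : ℕ → ℕ, StrictMono φ ∧ Antitone (f ∘ φ) := by
  obtain ⟨g, hinc | hnoninc⟩ := exists_increasing_or_nonincreasing_subseq (· < ·) f
  · have hmono : StrictMono (f ∘ g) :=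
      strictMono_nat_of_lt_succ fun n => hinc n (n + 1) n.lt_succ_self
    have hfg := hf.comp g.strictMono.tendsto_atTop
    obtain ⟨n, hn⟩ := (g.strictMono.tendsto_atTop.eventually ha).exists
    exact absurd (hmono.monotone.ge_of_tendsto hfg n) (not_le.2 hn)
  · refine ⟨g, g.strictMono, fun m n hmn => ?_⟩
    rcases hmn.eq_or_lt with rfl | hlt
    · rfl
    · exact not_lt.1 (hnoninc m n hlt)

theorem tendsto_atTop_of_isArgmin_Icc {s : ℕ → α} {N : ℕ} {a : α}
    (hs : Tendsto s atTop (𝓝 a)) (ha : ∀ k ≥ N, a < s k) {m : ℕ → ℕ}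
    (hm : ∀ n ≥ N, m n ∈ Finset.Icc N n ∧ ∀ k ∈ Finset.Icc N n, s (m n) ≤ s k) :
    Tendsto m atTop atTop := by
  refine tendsto_atTop.2 fun K => ?_
  obtain ⟨hmK, hminK⟩ := hm (max K N) (le_max_right _ _)
  -- `s n` eventually drops below `min_{N ≤ k ≤ max K N} s k`, so its argmin leaves `[N, K]`.
  filter_upwards [hs.eventually_lt_const (ha _ (Finset.mem_Icc.1 hmK).1),
    eventually_ge_atTop (max K N)] with n hn hKn
  obtain ⟨hmn, hminn⟩ := hm n ((le_max_right _ _).trans hKn)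
  by_contra! hlt
  have hle : s (m (max K N)) ≤ s (m n) :=
    hminK _ (Finset.mem_Icc.2 ⟨(Finset.mem_Icc.1 hmn).1, hlt.le.trans (le_max_left _ _)⟩)
  exact (hle.trans (hminn n (Finset.mem_Icc.2 ⟨(le_max_right _ _).trans hKn, le_rfl⟩))).not_gt hn

end Order

namespace ScalingSeq

variable {r s : ℕ → ℝ} {L : ℝ}

theorem tendsto_zero_of_tendsto_div (hr : ScalingSeq r)
    (h : Tendsto (fun n => s n / r n) atTop (𝓝 L)) : Tendsto s atTop (𝓝 0) := by
  simpa using (h.mul hr.2).congr fun n => div_mul_cancel₀ _ (hr.1 n).ne'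

theorem eventually_pos_of_tendsto_div (hr : ScalingSeq r) (hL : 0 < L)
    (h : Tendsto (fun n => s n / r n) atTop (𝓝 L)) : ∀ᶠ n in atTop, 0 < s n :=
  (h.eventually_const_lt hL).mono fun n hn => (div_pos_iff_of_pos_right (hr.1 n)).1 hn

variable {X : Type*} [MetricSpace X] {p : X}

theorem exists_normalScaling_subseq (hr : ScalingSeq r) {z : ℕ → X} {A : ℝ} (hA : 0 < A)
    (hz : Tendsto (fun n => dist (z n) p / r n) atTop (𝓝 A)) :
    ∃ φ : ℕ → ℕ, StrictMono φ ∧ NormalScaling p (fun k => A * r (φ k)) := by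
  obtain ⟨φ, hφ, hanti⟩ := hr.2.exists_antitone_subseq (Eventually.of_forall hr.1)
  have hzφ : Tendsto (fun k => dist (z (φ k)) p / (A * r (φ k))) atTop (𝓝 1) := by
    simpa only [Function.comp_def, mul_comm A, ← div_div, div_self hA.ne'] using
      (hz.comp hφ.tendsto_atTop).div_const A
  refine ⟨φ, hφ, ⟨fun k => mul_pos hA (hr.1 _), ?_⟩, ?_, _, hzφ⟩
  · simpa using (hr.2.comp hφ.tendsto_atTop).const_mul A
  · exact Eventually.of_forall fun k => mul_le_mul_of_nonneg_left (hanti k.le_succ) hA.le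

end ScalingSeq

section PointedMetric

variable {X : Type*} [MetricSpace X] {p : X} {r : ℕ → ℝ}

theorem le_add_of_tendsto_dist_div (hr : ∀ n, 0 < r n) {x y : ℕ → X} {L A B : ℝ}
    (hxy : Tendsto (fun n => dist (x n) (y n) / r n) atTop (𝓝 L))
    (hx : Tendsto (fun n => dist (x n) p / r n) atTop (𝓝 A))
    (hy : Tendsto (fun n => dist (y n) p / r n) atTop (𝓝 B)) : L ≤ A + B :=
  le_of_tendsto_of_tendsto' hxy (hx.add hy) fun n => by
    rw [← add_div]
    exact div_le_div_of_nonneg_right (dist_triangle_right _ _ _) (hr n).le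

theorem SelfStable.exists_normalScaling_subseq {F : Set (ℕ → X)} (hr : ScalingSeq r)
    (hF : SelfStable r F) (hp : (fun _ => p) ∈ F) {x y : ℕ → X} (hx : x ∈ F) (hy : y ∈ F)
    {L : ℝ} (hL : 0 < L) (hxy : Tendsto (fun n => dist (x n) (y n) / r n) atTop (𝓝 L)) :
    ∃ c : ℝ, 0 < c ∧ ∃ φ : ℕ → ℕ, StrictMono φ ∧ NormalScaling p (fun k => c * r (φ k)) := by
  obtain ⟨A, hA⟩ := hF x hx _ hp
  obtain ⟨B, hB⟩ := hF y hy _ hp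
  have hLAB := le_add_of_tendsto_dist_div hr.1 hxy hA hB
  rcases lt_or_ge 0 A with hApos | hAnonpos
  · exact ⟨A, hApos, hr.exists_normalScaling_subseq hApos hA⟩
  · have hBpos : 0 < B := by linarith
    exact ⟨B, hBpos, hr.exists_normalScaling_subseq hBpos hB⟩

theorem exists_antitone_dist_subseq (hr : ScalingSeq r) {x : ℕ → X}
    (hx : Tendsto (fun n => dist (x n) p / r n) atTop (𝓝 1)) :
    ∃ φ : ℕ → ℕ, StrictMono φ ∧ Antitone (fun k => dist (x (φ k)) p) :=
  (hr.tendsto_zero_of_tendsto_div hx).exists_antitone_subseq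
    (hr.eventually_pos_of_tendsto_div one_pos hx)

theorem NormalScaling.exists_witness_evDecr (hr : NormalScaling p r) :
    ∃ x : ℕ → X, Tendsto (fun n => dist (x n) p / r n) atTop (𝓝 1) ∧
      EvDecr (fun n => dist (x n) p) := by
  obtain ⟨hsc, hdec, z, hz⟩ := hr
  set s : ℕ → ℝ := fun n => dist (z n) p
  obtain ⟨N, hN⟩ := eventually_atTop.1
    ((hsc.eventually_pos_of_tendsto_div one_pos hz).and hdec)
  have hr_anti : AntitoneOn r (Ici N) := antitoneOn_nat_Ici_of_succ_le fun n hn => (hN n hn).2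
  obtain ⟨m, hm⟩ := exists_argmin_Icc s N
  have hm_top : Tendsto m atTop atTop :=
    tendsto_atTop_of_isArgmin_Icc (hsc.tendsto_zero_of_tendsto_div hz)
      (fun k hk => (hN k hk).1) hm
  refine ⟨z ∘ m, tendsto_of_tendsto_of_tendsto_of_le_of_le' (hz.comp hm_top) hz ?_ ?_, ?_⟩
  all_goals filter_upwards [eventually_ge_atTop N] with n hn
  · obtain ⟨hNm, hmn⟩ := Finset.mem_Icc.1 (hm n hn).1
    exact div_le_div_of_nonneg_left dist_nonneg (hsc.1 n) (hr_anti hNm (le_trans hNm hmn) hmn)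
  · exact div_le_div_of_nonneg_right ((hm n hn).2 n (Finset.mem_Icc.2 ⟨hn, le_rfl⟩)) (hsc.1 n).le
  · obtain ⟨hNm, hmn⟩ := Finset.mem_Icc.1 (hm n hn).1
    exact (hm (n + 1) (hn.trans n.le_succ)).2 _ (Finset.mem_Icc.2 ⟨hNm, hmn.trans n.le_succ⟩)

end PointedMetric

/-- (i1) a self-stable family containing `p̃` with two members at positive
limit distance yields, after rescaling by a constant and passing to a subsequence, a
normal scaling sequence; (i2) if `lim d(xₙ,p)/rₙ = 1` then `(d(x_{n_k},p))ₖ` is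
decreasing along some subsequence; (i3) every normal scaling sequence admits a witness
`(xₙ)` with `(d(xₙ,p))ₙ` eventually decreasing. -/
theorem stmt_7 {X : Type*} [MetricSpace X] (p : X) :
    (∀ (r : ℕ → ℝ) (F : Set (ℕ → X)), ScalingSeq r → SelfStable r F →
      (fun _ => p) ∈ F → ∀ x ∈ F, ∀ y ∈ F, ∀ L : ℝ, 0 < L →
      Tendsto (fun n => dist (x n) (y n) / r n) atTop (𝓝 L) →
      ∃ c : ℝ, 0 < c ∧ ∃ φ : ℕ → ℕ, StrictMono φ ∧
        NormalScaling p (fun k => c * r (φ k))) ∧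
    (∀ (r : ℕ → ℝ) (x : ℕ → X), ScalingSeq r →
      Tendsto (fun n => dist (x n) p / r n) atTop (𝓝 (1 : ℝ)) →
      ∃ φ : ℕ → ℕ, StrictMono φ ∧ Antitone (fun k => dist (x (φ k)) p)) ∧
    (∀ r : ℕ → ℝ, NormalScaling p r →
      ∃ x : ℕ → X, Tendsto (fun n => dist (x n) p / r n) atTop (𝓝 (1 : ℝ)) ∧
        EvDecr (fun n => dist (x n) p)) :=
  ⟨fun _ _ hr hF hp _ hx _ hy _ hL hxy => hF.exists_normalScaling_subseq hr hp hx hy hL hxy,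
    fun _ _ hr hx => exists_antitone_dist_subseq hr hx,
    fun _ hr => hr.exists_witness_evDecr⟩
end

section
/- Let (X,d,p) be a pointed metric space and let E = S_p(X), regarded as a pointed metric space with the metric induced from ℝ and marked point 0. Then R*_n(E,0) = R*_n(X,p). -/
open Filter Topology Set
open scoped ENNReal

lemma exists_seq_dist_eq_of_spSet_subset {X Y : Type*} [MetricSpace X] [MetricSpace Y]
    {p : X} {q : Y} (h : SpSet X p ⊆ SpSet Y q) (x : ℕ → X) :
    ∃ y : ℕ → Y, ∀ n, dist (y n) q = dist (x n) p := by
  choose y hy using fun n => h ⟨x n, rfl⟩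
  exact ⟨y, fun n => (hy n).symm⟩

lemma NormalScaling.of_spSet_subset {X Y : Type*} [MetricSpace X] [MetricSpace Y]
    {p : X} {q : Y} (h : SpSet X p ⊆ SpSet Y q) {r : ℕ → ℝ} (hr : NormalScaling p r) :
    NormalScaling q r := by
  obtain ⟨hs, hd, x, hx⟩ := hr
  obtain ⟨y, hy⟩ := exists_seq_dist_eq_of_spSet_subset h x
  exact ⟨hs, hd, y, by simpa only [hy] using hx⟩

lemma RstarN_mono {X Y : Type*} [MetricSpace X] [MetricSpace Y] {p : X} {q : Y}
    (h : SpSet X p ⊆ SpSet Y q) : RstarN X p ≤ RstarN Y q := by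
  refine sSup_le_sSup ?_
  rintro v ⟨r, x, L, hr, hx, rfl⟩
  obtain ⟨y, hy⟩ := exists_seq_dist_eq_of_spSet_subset h x
  exact ⟨r, y, L, hr.of_spSet_subset h, by simpa only [hy] using hx, rfl⟩

lemma RstarN_eq_of_spSet_eq {X Y : Type*} [MetricSpace X] [MetricSpace Y] {p : X} {q : Y}
    (h : SpSet X p = SpSet Y q) : RstarN X p = RstarN Y q :=
  le_antisymm (RstarN_mono h.subset) (RstarN_mono h.symm.subset)

lemma spSet_spSet {X : Type*} [MetricSpace X] (p : X) :
    SpSet (SpSet X p) (⟨0, ⟨p, (dist_self p).symm⟩⟩ : SpSet X p) = SpSet X p := by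
  ext t
  constructor
  · rintro ⟨⟨_, x, rfl⟩, rfl⟩
    exact ⟨x, by simp [Subtype.dist_eq]⟩
  · rintro ⟨x, rfl⟩
    exact ⟨⟨dist x p, x, rfl⟩, by simp [Subtype.dist_eq]⟩

/-- `R*_n(E,0) = R*_n(X,p)` for `E = S_p(X)` with the metric induced
from `ℝ` and marked point `0`. -/
theorem stmt_8 {X : Type*} [MetricSpace X] (p : X) :
    RstarN (SpSet X p) (⟨0, ⟨p, (dist_self p).symm⟩⟩ : SpSet X p) = RstarN X p :=
  RstarN_eq_of_spSet_eq (spSet_spSet p)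
end
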